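/- arXiv:1806.03803 — 6 statements merged into one kernel-verified Lean document; each statement's English description precedes it below -/
import Mathlib

section
/- (Maximal inequality via Legendre dual) Let T be a nonempty finite set and {X_t}_{t∈T} real random variables with log E[e^{λX_t}] ≤ ψ(λ) for all λ ≥ 0 and t ∈ T, where ψ is convex with ψ(0)=ψ'(0)=0. Then E[max_{t∈T} X_t] ≤ (ψ*)^{-1}(log |T|). -/
open MeasureTheory ProbabilityTheory Real

/-- Legendre dual on `λ ≥ 0`, valued in `EReal`. -/
noncomputable def legendre (ψ : ℝ → ℝ) (x : ℝ) : EReal :=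
  ⨆ l : {l : ℝ // 0 ≤ l}, (((l : ℝ) * x - ψ l : ℝ) : EReal)

/-- Inverse of the Legendre dual on `[0,∞)`. -/
noncomputable def legendreInv (ψ : ℝ → ℝ) (y : ℝ) : ℝ :=
  sInf {x : ℝ | 0 ≤ x ∧ (y : EReal) ≤ legendre ψ x}

/-- Mutual information (in nats) between `W` and `Y`: KL divergence between the joint law
and the product of marginals. -/
noncomputable def mutualInfoReal {Ω T E : Type*} [MeasurableSpace Ω] [MeasurableSpace T]
    [MeasurableSpace E] (μ : Measure Ω) (W : Ω → T) (Y : Ω → E) : ℝ :=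
  ∫ p, Real.log ((Measure.rnDeriv (μ.map (fun ω => (W ω, Y ω)))
      ((μ.map W).prod (μ.map Y))) p).toReal ∂(μ.map (fun ω => (W ω, Y ω)))

open Filter Topology in
lemma aux_slope_tendsto {ψ : ℝ → ℝ} (h0 : ψ 0 = 0)
    (hd : HasDerivWithinAt ψ 0 (Set.Ici 0) 0) :
    Tendsto (fun l => ψ l / l) (𝓝[>] (0:ℝ)) (𝓝 0) := by
  have := hasDerivWithinAt_iff_tendsto_slope.mp hd
  have hs : Set.Ici (0:ℝ) \ {0} = Set.Ioi 0 := by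
    ext x; simp [Set.mem_diff, Set.mem_Ici, Set.mem_Ioi, lt_iff_le_and_ne, eq_comm]
  rw [hs] at this
  refine this.congr fun l => ?_
  simp [slope_def_field, div_eq_div_iff, h0]

lemma aux_psi_nonneg {ψ : ℝ → ℝ} (hconv : ConvexOn ℝ (Set.Ici 0) ψ) (h0 : ψ 0 = 0)
    (hd : HasDerivWithinAt ψ 0 (Set.Ici 0) 0) {l : ℝ} (hl : 0 ≤ l) : 0 ≤ ψ l := by
  rcases eq_or_lt_of_le hl with rfl | hl
  · simp [h0]
  have key : ∀ t ∈ Set.Ioo (0:ℝ) l, ψ t / t ≤ ψ l / l := by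
    intro t ht
    have := hconv.secant_mono (a := 0) (x := t) (y := l)
      (Set.mem_Ici.mpr le_rfl) (Set.mem_Ici.mpr ht.1.le) (Set.mem_Ici.mpr hl.le)
      ht.1.ne' hl.ne' ht.2.le
    simpa [h0] using this
  have hlim : (0:ℝ) ≤ ψ l / l := by
    refine le_of_tendsto (aux_slope_tendsto h0 hd) ?_
    filter_upwards [Ioo_mem_nhdsGT_of_mem (Set.mem_Ico.mpr ⟨le_rfl, hl⟩)] with t ht
    exact key t ht
  have := mul_le_mul_of_nonneg_right hlim hl.le
  rwa [zero_mul, div_mul_cancel₀ _ hl.ne'] at this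

lemma aux_key {Ω T : Type*} [MeasurableSpace Ω] (μ : Measure Ω)
    [IsProbabilityMeasure μ] [Fintype T] [Nonempty T]
    (X : T → Ω → ℝ) (hmeas : ∀ t, Measurable (X t)) (ψ : ℝ → ℝ)
    (h : ∀ t, ∀ l : ℝ, 0 ≤ l → Integrable (fun ω => Real.exp (l * X t ω)) μ ∧
      Real.log (∫ ω, Real.exp (l * X t ω) ∂μ) ≤ ψ l)
    (hfi : Integrable (fun ω => ⨆ t, X t ω) μ) {l : ℝ} (hl : 0 < l) :
    l * (∫ ω, (⨆ t, X t ω) ∂μ) - ψ l ≤ Real.log (Fintype.card T) := by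
  set f : Ω → ℝ := fun ω => ⨆ t, X t ω with hf
  have hmf : Measurable f := Measurable.iSup fun t => hmeas t
  have hpt : ∀ ω, Real.exp (l * f ω) ≤ ∑ t, Real.exp (l * X t ω) := by
    intro ω
    obtain ⟨t0, ht0⟩ : ∃ t0, X t0 ω = ⨆ t, X t ω := exists_eq_ciSup_of_finite
    calc Real.exp (l * f ω) = Real.exp (l * X t0 ω) := by simp only [hf, ← ht0]
    _ ≤ ∑ t, Real.exp (l * X t ω) :=
        Finset.single_le_sum (f := fun t => Real.exp (l * X t ω))
          (fun t _ => (Real.exp_pos _).le) (Finset.mem_univ t0)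
  have hsumint : Integrable (fun ω => ∑ t, Real.exp (l * X t ω)) μ :=
    integrable_finset_sum _ fun t _ => (h t l hl.le).1
  have hgint : Integrable (fun ω => Real.exp (l * f ω)) μ := by
    refine hsumint.mono' ((hmf.const_mul l).exp.aestronglyMeasurable) ?_
    exact ae_of_all _ fun ω => by
      rw [Real.norm_eq_abs, abs_of_nonneg (Real.exp_pos _).le]; exact hpt ω
  have hjensen : Real.exp (∫ ω, l * f ω ∂μ) ≤ ∫ ω, Real.exp (l * f ω) ∂μ := by
    have := convexOn_exp.map_integral_le (μ := μ) (f := fun ω => l * f ω)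
      Real.continuous_exp.continuousOn isClosed_univ
      (Filter.Eventually.of_forall fun _ => Set.mem_univ _) (hfi.const_mul l) ?_
    · exact this
    · exact hgint
  have h2 : (∫ ω, Real.exp (l * f ω) ∂μ) ≤ (Fintype.card T : ℝ) * Real.exp (ψ l) := by
    calc (∫ ω, Real.exp (l * f ω) ∂μ) ≤ ∫ ω, ∑ t, Real.exp (l * X t ω) ∂μ :=
          integral_mono hgint hsumint hpt
    _ = ∑ t, ∫ ω, Real.exp (l * X t ω) ∂μ := integral_finset_sum _ fun t _ => (h t l hl.le).1
    _ ≤ ∑ _t : T, Real.exp (ψ l) := by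
        refine Finset.sum_le_sum fun t _ => ?_
        exact (Real.le_exp_log _).trans (Real.exp_le_exp.mpr (h t l hl.le).2)
    _ = (Fintype.card T : ℝ) * Real.exp (ψ l) := by
        rw [Finset.sum_const, Finset.card_univ, nsmul_eq_mul]
  have h3 : Real.exp (l * ∫ ω, f ω ∂μ) ≤ (Fintype.card T : ℝ) * Real.exp (ψ l) := by
    have : (∫ ω, l * f ω ∂μ) = l * ∫ ω, f ω ∂μ := by
      simpa [smul_eq_mul] using integral_smul (μ := μ) l f
    rw [← this]; exact hjensen.trans h2
  have hN : (0:ℝ) < (Fintype.card T : ℝ) := by exact_mod_cast Fintype.card_pos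
  have := Real.log_le_log (Real.exp_pos _) h3
  rw [Real.log_exp, Real.log_mul hN.ne' (Real.exp_pos _).ne', Real.log_exp] at this
  linarith

open Filter Topology in
/-- Maximal inequality via the Legendre dual: for a finite family with
`log E[e^{λ X_t}] ≤ ψ(λ)` for `λ ≥ 0`, one has `E[max_t X_t] ≤ (ψ*)⁻¹(log |T|)`. -/
theorem maximal_inequality {Ω T : Type*} [MeasurableSpace Ω] (μ : Measure Ω)
    [IsProbabilityMeasure μ] [Fintype T] [Nonempty T]
    (X : T → Ω → ℝ) (hmeas : ∀ t, Measurable (X t))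
    (ψ : ℝ → ℝ) (hconv : ConvexOn ℝ (Set.Ici 0) ψ) (h0 : ψ 0 = 0)
    (hd : HasDerivWithinAt ψ 0 (Set.Ici 0) 0)
    (h : ∀ t, ∀ l : ℝ, 0 ≤ l → Integrable (fun ω => Real.exp (l * X t ω)) μ ∧
      Real.log (∫ ω, Real.exp (l * X t ω) ∂μ) ≤ ψ l) :
    (∫ ω, (⨆ t, X t ω) ∂μ) ≤ legendreInv ψ (Real.log (Fintype.card T)) := by
  set y : ℝ := Real.log (Fintype.card T) with hy
  have hN1 : (1:ℝ) ≤ (Fintype.card T : ℝ) := by exact_mod_cast Fintype.card_pos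
  have hy0 : 0 ≤ y := Real.log_nonneg hN1
  -- the defining set is nonempty
  have hSne : (max 0 (y + ψ 1)) ∈ {x : ℝ | 0 ≤ x ∧ (y : EReal) ≤ legendre ψ x} := by
    refine ⟨le_max_left _ _, ?_⟩
    have h1 : (y : EReal) ≤ (((1:ℝ) * max 0 (y + ψ 1) - ψ 1 : ℝ) : EReal) := by
      rw [EReal.coe_le_coe_iff]
      have := le_max_right 0 (y + ψ 1)
      linarith
    exact h1.trans (le_iSup (fun l : {l : ℝ // 0 ≤ l} =>
      (((l : ℝ) * max 0 (y + ψ 1) - ψ l : ℝ) : EReal)) ⟨1, zero_le_one⟩)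
  refine le_csInf ⟨_, hSne⟩ ?_
  rintro x ⟨hx0, hxy⟩
  by_cases hfi : Integrable (fun ω => ⨆ t, X t ω) μ
  swap
  · rw [integral_undef hfi]; exact hx0
  set E : ℝ := ∫ ω, (⨆ t, X t ω) ∂μ with hE
  have key : ∀ l : ℝ, 0 < l → l * E - ψ l ≤ y := fun l hl =>
    aux_key μ X hmeas ψ h hfi hl
  by_contra hcon
  push_neg at hcon
  rcases eq_or_lt_of_le hy0 with hy0' | hy0'
  · -- y = 0 : then E ≤ 0 ≤ x
    have hE0 : E ≤ 0 := by
      refine ge_of_tendsto (aux_slope_tendsto h0 hd) ?_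
      filter_upwards [self_mem_nhdsWithin] with l hl
      have := key l hl
      rw [← hy0'] at this
      rw [le_div_iff₀ hl, mul_comm]
      linarith
    linarith
  · -- y > 0 : derive a strict upper bound on the Legendre transform at x
    set δ : ℝ := E - x with hδ
    have hδ0 : 0 < δ := by simp [hδ]; linarith
    set l0 : ℝ := y / (2 * (x + 1)) with hl0
    have hl0pos : 0 < l0 := by positivity
    have hl0x : l0 * (x + 1) = y / 2 := by
      rw [hl0]; field_simp
    set c : ℝ := max (y / 2) (y - l0 * δ) with hc
    have hcy : c < y := by
      apply max_lt
      · linarith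
      · nlinarith
    have hle : legendre ψ x ≤ (c : EReal) := by
      refine iSup_le ?_
      rintro ⟨l, hl⟩
      rw [EReal.coe_le_coe_iff]
      rcases le_or_gt l l0 with hll | hll
      · have hψ : 0 ≤ ψ l := aux_psi_nonneg hconv h0 hd hl
        have : l * x ≤ l0 * x := mul_le_mul_of_nonneg_right hll hx0
        have : l * x ≤ y / 2 := by nlinarith
        have : l * x - ψ l ≤ y / 2 := by linarith
        exact this.trans (le_max_left _ _)
      · have hkey := key l (hl0pos.trans hll)
        have : l0 * δ ≤ l * δ := mul_le_mul_of_nonneg_right hll.le hδ0.le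
        have : l * x - ψ l ≤ y - l0 * δ := by nlinarith
        exact this.trans (le_max_right _ _)
    have : (y : EReal) ≤ (c : EReal) := hxy.trans hle
    rw [EReal.coe_le_coe_iff] at this
    linarith
end

section
/- (Mutual information bound, subgaussian case) Let T be a finite set, {X_t}_{t∈T} random variables with each X_t centered σ²-subgaussian, and W a T-valued random variable defined on the same probability space. Then E[X_W] ≤ √(2σ² I(W; (X_t)_{t∈T})), where I denotes mutual information (in nats). -/
open MeasureTheory ProbabilityTheory Real
open scoped ENNReal NNReal

private lemma measurable_eval_pair {T : Type*} [Countable T] [MeasurableSpace T]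
    [MeasurableSingletonClass T] :
    Measurable (fun p : T × (T → ℝ) => p.2 p.1) := by
  have h : Measurable (fun q : (T → ℝ) × T => q.1 q.2) :=
    measurable_from_prod_countable_left fun t => measurable_pi_apply t
  exact h.comp measurable_swap

private lemma abs_log_mul_self_le {c x : ℝ} (hx : 0 ≤ x) (hxc : x ≤ c) :
    |Real.log x| * x ≤ 1 + c * |Real.log c| := by
  have hc : 0 ≤ c := hx.trans hxc
  have hK : 0 ≤ c * |Real.log c| := mul_nonneg hc (abs_nonneg _)
  rcases eq_or_lt_of_le hx with h0 | hx0
  · simp [← h0]; linarith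
  rcases le_or_gt x 1 with h1 | h1
  · have hlog : Real.log x ≤ 0 := Real.log_nonpos hx h1
    have hinv : Real.log x⁻¹ ≤ x⁻¹ - 1 := Real.log_le_sub_one_of_pos (inv_pos.mpr hx0)
    rw [Real.log_inv] at hinv
    have h2 : |Real.log x| = -Real.log x := abs_of_nonpos hlog
    have h3 : -Real.log x * x ≤ (x⁻¹ - 1) * x := by nlinarith
    have h4 : (x⁻¹ - 1) * x = 1 - x := by field_simp
    nlinarith
  · have hc1 : 1 < c := h1.trans_le hxc
    have hlx : 0 ≤ Real.log x := Real.log_nonneg h1.le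
    have hlc : Real.log x ≤ Real.log c := Real.log_le_log hx0 hxc
    have h2 : |Real.log x| = Real.log x := abs_of_nonneg hlx
    have h3 : |Real.log c| = Real.log c := abs_of_nonneg (Real.log_nonneg hc1.le)
    nlinarith

/-- Mutual information bound, subgaussian case: for a finite family of centered
`σ²`-subgaussian variables and a `T`-valued random variable `W`,
`E[X_W] ≤ √(2σ² I(W ; (X_t)_{t∈T}))`. -/
theorem mutual_information_bound_subgaussian {Ω T : Type*} [MeasurableSpace Ω]
    (μ : Measure Ω) [IsProbabilityMeasure μ] [Fintype T] [Nonempty T]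
    [MeasurableSpace T] [MeasurableSingletonClass T]
    (X : T → Ω → ℝ) (σ : ℝ) (hσ : 0 < σ) (hmeas : ∀ t, Measurable (X t))
    (hcent : ∀ t, Integrable (X t) μ ∧ ∫ ω, X t ω ∂μ = 0)
    (hsub : ∀ t, ∀ l : ℝ, Integrable (fun ω => Real.exp (l * X t ω)) μ ∧
      ∫ ω, Real.exp (l * X t ω) ∂μ ≤ Real.exp (l ^ 2 * σ ^ 2 / 2))
    (W : Ω → T) (hW : Measurable W) :
    (∫ ω, X (W ω) ω ∂μ) ≤
      Real.sqrt (2 * σ ^ 2 * mutualInfoReal μ W (fun ω => fun t => X t ω)) := by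
  classical
  have hYmeas : Measurable (fun ω => fun t => X t ω : Ω → T → ℝ) :=
    measurable_pi_lambda _ hmeas
  set Y : Ω → (T → ℝ) := fun ω => fun t => X t ω with hYdef
  have hWY : Measurable fun ω => (W ω, Y ω) := hW.prodMk hYmeas
  set ν : Measure (T × (T → ℝ)) := μ.map (fun ω => (W ω, Y ω)) with hνdef
  set pm : Measure (T × (T → ℝ)) := (μ.map W).prod (μ.map Y) with hpmdef
  haveI hPW : IsProbabilityMeasure (μ.map W) := Measure.isProbabilityMeasure_map hW.aemeasurable
  haveI hPY : IsProbabilityMeasure (μ.map Y) := Measure.isProbabilityMeasure_map hYmeas.aemeasurable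
  haveI hPν : IsProbabilityMeasure ν := Measure.isProbabilityMeasure_map hWY.aemeasurable
  haveI hPpm : IsProbabilityMeasure pm := by rw [hpmdef]; infer_instance
  set f : T × (T → ℝ) → ℝ := fun p => p.2 p.1 with hfdef
  have hfmeas : Measurable f := measurable_eval_pair
  -- the domination constant
  set C : ℝ≥0∞ := ∑ t : T, (if (μ.map W) {t} = 0 then 0 else ((μ.map W) {t})⁻¹) with hCdef
  have hC_ne_top : C ≠ ∞ := by
    rw [hCdef]
    refine (ENNReal.sum_lt_top.mpr fun t _ => ?_).ne
    split_ifs with h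
    · exact ENNReal.zero_lt_top
    · exact (ENNReal.inv_ne_top.mpr h).lt_top
  have hdom : ∀ S, MeasurableSet S → ν S ≤ C * pm S := by
    intro S hS
    have hνS : ν S = μ ((fun ω => (W ω, Y ω)) ⁻¹' S) := Measure.map_apply hWY hS
    have hpmS : pm S = ∑ t : T, (μ.map W) {t} * (μ.map Y) (Prod.mk t ⁻¹' S) := by
      rw [hpmdef, Measure.prod_apply hS, lintegral_fintype]
      exact Finset.sum_congr rfl fun t _ => mul_comm _ _
    have hcover : (fun ω => (W ω, Y ω)) ⁻¹' S ⊆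
        ⋃ t : T, (W ⁻¹' {t} ∩ Y ⁻¹' (Prod.mk t ⁻¹' S)) := by
      intro ω hω
      exact Set.mem_iUnion.2 ⟨W ω, ⟨rfl, hω⟩⟩
    have hterm : ∀ t : T, μ (W ⁻¹' {t} ∩ Y ⁻¹' (Prod.mk t ⁻¹' S)) ≤
        (if (μ.map W) {t} = 0 then 0 else ((μ.map W) {t})⁻¹) *
          ((μ.map W) {t} * (μ.map Y) (Prod.mk t ⁻¹' S)) := by
      intro t
      by_cases hp : (μ.map W) {t} = 0
      · rw [if_pos hp, zero_mul, nonpos_iff_eq_zero]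
        have hW0 : μ (W ⁻¹' {t}) = 0 := by
          rw [← Measure.map_apply hW (measurableSet_singleton t)]; exact hp
        exact measure_mono_null Set.inter_subset_left hW0
      · rw [if_neg hp, ← mul_assoc, ENNReal.inv_mul_cancel hp (measure_ne_top _ _), one_mul,
          Measure.map_apply hYmeas (measurable_prodMk_left hS)]
        exact measure_mono Set.inter_subset_right
    calc ν S ≤ μ (⋃ t : T, (W ⁻¹' {t} ∩ Y ⁻¹' (Prod.mk t ⁻¹' S))) :=
          hνS ▸ measure_mono hcover
      _ ≤ ∑ t : T, μ (W ⁻¹' {t} ∩ Y ⁻¹' (Prod.mk t ⁻¹' S)) := measure_iUnion_fintype_le _ _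
      _ ≤ ∑ t : T, (if (μ.map W) {t} = 0 then 0 else ((μ.map W) {t})⁻¹) *
            ((μ.map W) {t} * (μ.map Y) (Prod.mk t ⁻¹' S)) :=
          Finset.sum_le_sum fun t _ => hterm t
      _ ≤ ∑ t : T, (if (μ.map W) {t} = 0 then 0 else ((μ.map W) {t})⁻¹) * pm S := by
          refine Finset.sum_le_sum fun t _ => mul_le_mul_right ?_ _
          rw [hpmS]
          exact Finset.single_le_sum (f := fun t => (μ.map W) {t} * (μ.map Y) (Prod.mk t ⁻¹' S))
            (fun t _ => zero_le) (Finset.mem_univ t)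
      _ = C * pm S := by rw [hCdef, Finset.sum_mul]
  have habs : ν ≪ pm := by
    refine Measure.AbsolutelyContinuous.mk fun S hS hS0 => ?_
    have := hdom S hS
    rw [hS0, mul_zero] at this
    exact nonpos_iff_eq_zero.mp this
  -- Radon-Nikodym derivative
  set g : T × (T → ℝ) → ℝ≥0∞ := ν.rnDeriv pm with hgdef
  have hgmeas : Measurable g := Measure.measurable_rnDeriv ν pm
  have hg_le_pm : ∀ᵐ p ∂pm, g p ≤ C := by
    refine ae_le_of_forall_setLIntegral_le_of_sigmaFinite hgmeas fun s hs _ => ?_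
    rw [setLIntegral_const]
    calc ∫⁻ x in s, g x ∂pm ≤ ν s := Measure.setLIntegral_rnDeriv_le s
      _ ≤ C * pm s := hdom s hs
  have hg_lt_top_pm : ∀ᵐ p ∂pm, g p < ∞ := Measure.rnDeriv_lt_top ν pm
  have hν_eq : pm.withDensity g = ν := Measure.withDensity_rnDeriv_eq ν pm habs
  set G : T × (T → ℝ) → ℝ := fun p => (g p).toReal with hGdef
  have hGmeas : Measurable G := hgmeas.ennreal_toReal
  set c : ℝ := C.toReal with hcdef
  have hG_le_pm : ∀ᵐ p ∂pm, G p ≤ c := by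
    filter_upwards [hg_le_pm] with p hp using ENNReal.toReal_mono hC_ne_top hp
  have hG_nonneg : ∀ p, 0 ≤ G p := fun p => ENNReal.toReal_nonneg
  have hg_pos_ν : ∀ᵐ p ∂ν, 0 < g p := Measure.rnDeriv_pos habs
  have hg_lt_top_ν : ∀ᵐ p ∂ν, g p < ∞ := habs.ae_le hg_lt_top_pm
  have hG_pos_ν : ∀ᵐ p ∂ν, 0 < G p := by
    filter_upwards [hg_pos_ν, hg_lt_top_ν] with p h1 h2 using ENNReal.toReal_pos h1.ne' h2.ne
  set gn : T × (T → ℝ) → ℝ≥0 := fun p => (g p).toNNReal with hgndef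
  have hgnmeas : Measurable gn := hgmeas.ennreal_toNNReal
  have hν_eq' : pm.withDensity (fun p => (gn p : ℝ≥0∞)) = ν := by
    rw [← hν_eq]
    exact withDensity_congr_ae
      (by filter_upwards [hg_lt_top_pm] with p hp using ENNReal.coe_toNNReal hp.ne)
  -- integrability of log G under ν
  have hlogG_int : Integrable (fun p => Real.log (G p)) ν := by
    rw [← hν_eq, integrable_withDensity_iff hgmeas hg_lt_top_pm]
    refine Integrable.mono' (integrable_const (1 + c * |Real.log c|))
      ((Real.measurable_log.comp hGmeas).mul hGmeas).aestronglyMeasurable ?_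
    filter_upwards [hG_le_pm] with p hp
    calc ‖Real.log (G p) * G p‖ = |Real.log (G p)| * G p := by
          rw [Real.norm_eq_abs, abs_mul, abs_of_nonneg (hG_nonneg p)]
      _ ≤ 1 + c * |Real.log c| := abs_log_mul_self_le (hG_nonneg p) hp
  -- integrability of exponentials under pm
  have hexp_int : ∀ l : ℝ, Integrable (fun p => Real.exp (l * f p)) pm := by
    intro l
    have hterm : ∀ t : T, Integrable (fun p : T × (T → ℝ) => Real.exp (l * p.2 t)) pm := by
      intro t
      have hmt : Measurable fun y : T → ℝ => Real.exp (l * y t) :=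
        Real.measurable_exp.comp (measurable_const.mul (measurable_pi_apply t))
      have h1 : Integrable (fun y : T → ℝ => Real.exp (l * y t)) (μ.map Y) := by
        rw [integrable_map_measure hmt.aestronglyMeasurable hYmeas.aemeasurable]
        exact (hsub t l).1
      have h2 : pm.map Prod.snd = μ.map Y := by
        rw [hpmdef, Measure.map_snd_prod, measure_univ, one_smul]
      have h3 : Integrable (fun y : T → ℝ => Real.exp (l * y t)) (pm.map Prod.snd) := by
        rw [h2]; exact h1
      exact (integrable_map_measure hmt.aestronglyMeasurable
        measurable_snd.aemeasurable).mp h3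
    refine Integrable.mono' (integrable_finset_sum Finset.univ fun t _ => hterm t)
      (Real.measurable_exp.comp (measurable_const.mul hfmeas)).aestronglyMeasurable
      (Filter.Eventually.of_forall fun p => ?_)
    rw [Real.norm_eq_abs, abs_of_nonneg (Real.exp_pos _).le]
    exact Finset.single_le_sum (f := fun t => Real.exp (l * p.2 t))
      (fun t _ => (Real.exp_pos _).le) (Finset.mem_univ p.1)
  have hA_le : ∀ l : ℝ, ∫ p, Real.exp (l * f p) ∂pm ≤ Real.exp (l ^ 2 * σ ^ 2 / 2) := by
    intro l
    have hfub : ∫ p, Real.exp (l * f p) ∂pm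
        = ∫ t, ∫ y, Real.exp (l * y t) ∂(μ.map Y) ∂(μ.map W) := by
      rw [hpmdef] at hexp_int ⊢
      exact integral_prod _ (hexp_int l)
    rw [hfub]
    have hmt : ∀ t : T, Measurable fun y : T → ℝ => Real.exp (l * y t) := fun t =>
      Real.measurable_exp.comp (measurable_const.mul (measurable_pi_apply t))
    calc ∫ t, ∫ y, Real.exp (l * y t) ∂(μ.map Y) ∂(μ.map W)
        ≤ ∫ _, Real.exp (l ^ 2 * σ ^ 2 / 2) ∂(μ.map W) := by
          refine integral_mono Integrable.of_finite (integrable_const _) fun t => ?_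
          rw [integral_map hYmeas.aemeasurable (hmt t).aestronglyMeasurable]
          exact (hsub t l).2
      _ = Real.exp (l ^ 2 * σ ^ 2 / 2) := by simp
  have hA_pos : ∀ l : ℝ, 0 < ∫ p, Real.exp (l * f p) ∂pm := fun l =>
    integral_exp_pos (hexp_int l)
  -- integrability of f under ν
  have hXW_meas : Measurable fun ω => X (W ω) ω := hfmeas.comp hWY
  have hXW_int : Integrable (fun ω => X (W ω) ω) μ := by
    refine Integrable.mono' (integrable_finset_sum Finset.univ fun t _ => (hcent t).1.abs)
      hXW_meas.aestronglyMeasurable (Filter.Eventually.of_forall fun ω => ?_)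
    rw [Real.norm_eq_abs]
    exact Finset.single_le_sum (f := fun t => |X t ω|) (fun t _ => abs_nonneg _)
      (Finset.mem_univ (W ω))
  have hf_int_ν : Integrable f ν := by
    rw [hνdef, integrable_map_measure hfmeas.aestronglyMeasurable hWY.aemeasurable]
    exact hXW_int
  have hEf : ∫ p, f p ∂ν = ∫ ω, X (W ω) ω ∂μ := by
    rw [hνdef, integral_map hWY.aemeasurable hfmeas.aestronglyMeasurable]
  have hMI : mutualInfoReal μ W Y = ∫ p, Real.log (G p) ∂ν := rfl
  -- key inequality
  have key : ∀ l : ℝ, 0 ≤ l →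
      l * ∫ ω, X (W ω) ω ∂μ ≤ (∫ p, Real.log (G p) ∂ν) + l ^ 2 * σ ^ 2 / 2 := by
    intro l hl
    set A := ∫ p, Real.exp (l * f p) ∂pm with hAdef
    have hA0 : 0 < A := hA_pos l
    have hexpmeas : Measurable fun p => Real.exp (l * f p) :=
      Real.measurable_exp.comp (measurable_const.mul hfmeas)
    -- the function G * (exp(l f)/G) is dominated by exp(l f) on pm
    have hq_int_pm : Integrable (fun p => Real.exp (l * f p) / G p * G p) pm := by
      refine Integrable.mono' (hexp_int l)
        ((hexpmeas.div hGmeas).mul hGmeas).aestronglyMeasurable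
        (Filter.Eventually.of_forall fun p => ?_)
      rw [Real.norm_eq_abs, abs_of_nonneg
        (mul_nonneg (div_nonneg (Real.exp_pos _).le (hG_nonneg p)) (hG_nonneg p))]
      rcases eq_or_ne (G p) 0 with h | h
      · rw [h, mul_zero]; exact (Real.exp_pos _).le
      · rw [div_mul_cancel₀ _ h]
    have hq_val : ∫ p, Real.exp (l * f p) / G p * G p ∂pm ≤ A := by
      refine integral_mono hq_int_pm (hexp_int l) fun p => ?_
      rcases eq_or_ne (G p) 0 with h | h
      · rw [h, mul_zero]; exact (Real.exp_pos _).le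
      · rw [div_mul_cancel₀ _ h]
    have hdiv_int_ν : Integrable (fun p => Real.exp (l * f p) / G p) ν := by
      rw [← hν_eq, integrable_withDensity_iff hgmeas hg_lt_top_pm]
      exact hq_int_pm
    have hdiv_val : ∫ p, Real.exp (l * f p) / G p ∂ν ≤ A := by
      have hrw : ∫ p, Real.exp (l * f p) / G p ∂ν
          = ∫ p, Real.exp (l * f p) / G p * G p ∂pm := by
        rw [← hν_eq', integral_withDensity_eq_integral_smul hgnmeas]
        refine integral_congr_ae (Filter.Eventually.of_forall fun p => ?_)
        exact mul_comm (G p) (Real.exp (l * f p) / G p)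
      rw [hrw]; exact hq_val
    -- pointwise inequality
    have hpt : ∀ᵐ p ∂ν, l * f p - Real.log (G p)
        ≤ Real.exp (l * f p) / G p / A - 1 + Real.log A := by
      filter_upwards [hG_pos_ν] with p hGp
      have hx : 0 < Real.exp (l * f p) / G p := div_pos (Real.exp_pos _) hGp
      have h1 : Real.log (Real.exp (l * f p) / G p) = l * f p - Real.log (G p) := by
        rw [Real.log_div (Real.exp_ne_zero _) hGp.ne', Real.log_exp]
      have h2 : Real.log (Real.exp (l * f p) / G p / A)
          ≤ Real.exp (l * f p) / G p / A - 1 :=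
        Real.log_le_sub_one_of_pos (div_pos hx hA0)
      rw [Real.log_div hx.ne' hA0.ne', h1] at h2
      linarith
    have hmain : ∫ p, (l * f p - Real.log (G p)) ∂ν
        ≤ ∫ p, (Real.exp (l * f p) / G p / A - 1 + Real.log A) ∂ν := by
      refine integral_mono_ae ((hf_int_ν.const_mul l).sub hlogG_int) ?_ hpt
      exact ((hdiv_int_ν.div_const A).sub (integrable_const 1)).add (integrable_const _)
    have hsub1 : Integrable (fun p => Real.exp (l * f p) / G p / A - 1) ν :=
      (hdiv_int_ν.div_const A).sub (integrable_const 1)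
    have hdiv1 : Integrable (fun p => Real.exp (l * f p) / G p / A) ν :=
      hdiv_int_ν.div_const A
    rw [integral_sub (hf_int_ν.const_mul l) hlogG_int, integral_const_mul,
      integral_add hsub1 (integrable_const (Real.log A)),
      integral_sub hdiv1 (integrable_const 1), integral_div,
      integral_const, integral_const, probReal_univ, one_smul,
      one_smul] at hmain
    have h5 : (∫ p, Real.exp (l * f p) / G p ∂ν) / A ≤ 1 := by
      rw [div_le_one hA0]; exact hdiv_val
    have hlogA : Real.log A ≤ l ^ 2 * σ ^ 2 / 2 :=
      (Real.log_le_iff_le_exp hA0).mpr (hA_le l)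
    rw [hEf] at hmain
    linarith
  -- conclusion
  rw [hMI]
  set E := ∫ ω, X (W ω) ω ∂μ with hEdef
  set Iv := ∫ p, Real.log (G p) ∂ν with hIvdef
  have hIv0 : 0 ≤ Iv := by have := key 0 le_rfl; simpa using this
  rcases le_or_gt E 0 with hE | hE
  · exact hE.trans (Real.sqrt_nonneg _)
  · have hσ2 : 0 < σ ^ 2 := by positivity
    have hl := key (E / σ ^ 2) (by positivity)
    have hE2 : E ^ 2 ≤ 2 * σ ^ 2 * Iv := by
      have h6 : E / σ ^ 2 * E ≤ Iv + (E / σ ^ 2) ^ 2 * σ ^ 2 / 2 := hl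
      have h7 : (E / σ ^ 2) ^ 2 * σ ^ 2 / 2 = E ^ 2 / (2 * σ ^ 2) := by
        field_simp
      have h8 : E / σ ^ 2 * E = E ^ 2 / σ ^ 2 := by field_simp
      rw [h7, h8] at h6
      have h9 : E ^ 2 / σ ^ 2 - E ^ 2 / (2 * σ ^ 2) = E ^ 2 / (2 * σ ^ 2) := by
        field_simp; ring
      have h10 : E ^ 2 / (2 * σ ^ 2) ≤ Iv := by linarith
      have h11 : E ^ 2 ≤ Iv * (2 * σ ^ 2) := (div_le_iff₀ (by positivity)).mp h10
      nlinarith [h11]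
    calc E ≤ Real.sqrt (E ^ 2) := by rw [Real.sqrt_sq hE.le]
      _ ≤ Real.sqrt (2 * σ ^ 2 * Iv) := Real.sqrt_le_sqrt hE2
end

section
/- (Mutual information bound, general ψ) Let T be a finite set, {X_t}_{t∈T} random variables with log E[e^{λX_t}] ≤ ψ(λ) for all λ ≥ 0 and t ∈ T, where ψ is convex with ψ(0)=ψ'(0)=0, and W a T-valued random variable. Then E[X_W] ≤ (ψ*)^{-1}(I(W; (X_t)_{t∈T})). -/
open MeasureTheory ProbabilityTheory Real

open scoped ENNReal NNReal

section auxsec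
open Filter Set

lemma gibbs_pointwise (a G : ℝ) (hG : 0 ≤ G) :
    (a - Real.log G) * G ≤ Real.exp a - G := by
  rcases hG.eq_or_lt with h | h
  · simp [← h, Real.exp_nonneg]
  · have h1 : a - Real.log G + 1 ≤ Real.exp (a - Real.log G) := Real.add_one_le_exp _
    have h2 : Real.exp (a - Real.log G) = Real.exp a / G := by
      rw [Real.exp_sub, Real.exp_log h]
    have h3 : (a - Real.log G) * G ≤ (Real.exp a / G - 1) * G := by
      apply mul_le_mul_of_nonneg_right _ hG
      rw [h2] at h1; linarith
    refine h3.trans ?_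
    rw [sub_mul, div_mul_cancel₀ _ h.ne', one_mul]

lemma slope_tendsto_zero {ψ : ℝ → ℝ} (h0 : ψ 0 = 0)
    (hd : HasDerivWithinAt ψ 0 (Set.Ici 0) 0) :
    Filter.Tendsto (fun l => ψ l / l) (nhdsWithin 0 (Set.Ioi 0)) (nhds 0) := by
  have h := hasDerivWithinAt_iff_tendsto_slope.mp hd
  rw [Set.Ici_sdiff_left] at h
  refine h.congr fun l => ?_
  rw [slope_def_field, h0, sub_zero, sub_zero]

lemma psi_nonneg {ψ : ℝ → ℝ} (hconv : ConvexOn ℝ (Set.Ici 0) ψ) (h0 : ψ 0 = 0)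
    (hd : HasDerivWithinAt ψ 0 (Set.Ici 0) 0) :
    ∀ l : ℝ, 0 ≤ l → 0 ≤ ψ l := by
  intro l hl
  rcases hl.eq_or_lt with h | hl0
  · rw [← h, h0]
  · have hmono := hconv.slope_mono (Set.self_mem_Ici (a := (0:ℝ)))
    rw [Set.Ici_sdiff_left] at hmono
    have hev : ∀ᶠ l' in nhdsWithin 0 (Set.Ioi 0), ψ l' / l' ≤ ψ l / l := by
      filter_upwards [self_mem_nhdsWithin,
        ((gt_mem_nhds hl0 : ∀ᶠ x in nhds (0:ℝ), x < l)).filter_mono nhdsWithin_le_nhds]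
        with l' hl' hl'lt
      have := hmono hl' (Set.mem_Ioi.2 hl0) hl'lt.le
      rwa [slope_def_field, slope_def_field, h0, sub_zero, sub_zero, sub_zero, sub_zero] at this
    have h0le : (0:ℝ) ≤ ψ l / l := le_of_tendsto (slope_tendsto_zero h0 hd) hev
    have := (le_div_iff₀ hl0).mp h0le
    linarith

lemma le_zero_of_le_slope {ψ : ℝ → ℝ} (h0 : ψ 0 = 0)
    (hd : HasDerivWithinAt ψ 0 (Set.Ici 0) 0) {m : ℝ}
    (h : ∀ l : ℝ, 0 < l → m ≤ ψ l / l) : m ≤ 0 :=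
  ge_of_tendsto (slope_tendsto_zero h0 hd)
    (eventually_nhdsWithin_of_forall fun l hl => h l hl)

lemma abs_log_mul_le {c x : ℝ} (hx : 0 ≤ x) (hxc : x ≤ c) :
    |Real.log x * x| ≤ max 1 (|Real.log c| * c) := by
  rcases hx.eq_or_lt with h | hx0
  · simp [← h]
  rcases le_or_gt x 1 with h1 | h1
  · exact le_max_of_le_left (Real.abs_log_mul_self_lt x hx0 h1).le
  · have hc1 : (1:ℝ) < c := h1.trans_le hxc
    have hlx : 0 ≤ Real.log x := Real.log_nonneg h1.le
    have hlc : Real.log x ≤ Real.log c := Real.log_le_log hx0 hxc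
    refine le_max_of_le_right ?_
    rw [abs_of_nonneg (mul_nonneg hlx hx0.le), abs_of_nonneg (Real.log_nonneg hc1.le)]
    exact mul_le_mul hlc hxc hx0.le (Real.log_nonneg hc1.le)

end auxsec

/-- Mutual information bound, general `ψ`: for a finite family with
`log E[e^{λ X_t}] ≤ ψ(λ)` for `λ ≥ 0` and a `T`-valued random variable `W`,
`E[X_W] ≤ (ψ*)⁻¹(I(W ; (X_t)_{t∈T}))`. -/
theorem mutual_information_bound {Ω T : Type*} [MeasurableSpace Ω]
    (μ : Measure Ω) [IsProbabilityMeasure μ] [Fintype T] [Nonempty T]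
    [MeasurableSpace T] [MeasurableSingletonClass T]
    (X : T → Ω → ℝ) (hmeas : ∀ t, Measurable (X t))
    (ψ : ℝ → ℝ) (hconv : ConvexOn ℝ (Set.Ici 0) ψ) (h0 : ψ 0 = 0)
    (hd : HasDerivWithinAt ψ 0 (Set.Ici 0) 0)
    (h : ∀ t, ∀ l : ℝ, 0 ≤ l → Integrable (fun ω => Real.exp (l * X t ω)) μ ∧
      Real.log (∫ ω, Real.exp (l * X t ω) ∂μ) ≤ ψ l)
    (W : Ω → T) (hW : Measurable W) :
    (∫ ω, X (W ω) ω ∂μ) ≤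
      legendreInv ψ (mutualInfoReal μ W (fun ω => fun t => X t ω)) := by
  classical
  have hInv_nonneg : ∀ y : ℝ, 0 ≤ legendreInv ψ y :=
    fun y => Real.sInf_nonneg (fun x hx => hx.1)
  by_cases hint : Integrable (fun ω => X (W ω) ω) μ
  swap
  · rw [integral_undef hint]; exact hInv_nonneg _
  set Xv : Ω → (T → ℝ) := fun ω t => X t ω with hXv_def
  have hXv : Measurable Xv := measurable_pi_lambda _ hmeas
  set Y : Ω → T × (T → ℝ) := fun ω => (W ω, Xv ω) with hY_def
  have hY : Measurable Y := hW.prodMk hXv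
  set P : Measure (T × (T → ℝ)) := μ.map Y with hP_def
  set κ : Measure T := μ.map W with hκ_def
  set ν : Measure (T → ℝ) := μ.map Xv with hν_def
  set Q : Measure (T × (T → ℝ)) := κ.prod ν with hQ_def
  haveI : IsProbabilityMeasure P := Measure.isProbabilityMeasure_map hY.aemeasurable
  haveI : IsProbabilityMeasure κ := Measure.isProbabilityMeasure_map hW.aemeasurable
  haveI : IsProbabilityMeasure ν := Measure.isProbabilityMeasure_map hXv.aemeasurable
  set I : ℝ := mutualInfoReal μ W Xv with hI_def
  set m : ℝ := ∫ ω, X (W ω) ω ∂μ with hm_def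
  -- the key inequality
  have key : ∀ l : ℝ, 0 ≤ l → l * m ≤ ψ l + I := by
    -- measurability of evaluation map
    have heval_eq : (fun p : T × (T → ℝ) => p.2 p.1)
        = fun p => ∑ t : T, if p.1 = t then p.2 t else 0 := by
      funext p; rw [Finset.sum_ite_eq]; simp
    have heval : Measurable (fun p : T × (T → ℝ) => p.2 p.1) := by
      rw [heval_eq]
      refine Finset.measurable_sum _ (fun t _ => Measurable.ite ?_ ?_ measurable_const)
      · exact measurable_fst (measurableSet_singleton t)
      · exact (measurable_pi_apply t).comp measurable_snd
    have huniv : ∑ t : T, κ {t} = 1 := by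
      have h1 := lintegral_fintype (μ := κ) (fun _ => (1:ℝ≥0∞))
      simp only [lintegral_const, measure_univ, mul_one, one_mul] at h1
      exact h1.symm
    have hPapp : ∀ s : Set (T × (T → ℝ)), MeasurableSet s →
        P s = ∑ t : T, μ (W ⁻¹' {t} ∩ Xv ⁻¹' (Prod.mk t ⁻¹' s)) := by
      intro s hs
      rw [hP_def, Measure.map_apply hY hs]
      have hdecomp : Y ⁻¹' s
          = ⋃ t ∈ (Finset.univ : Finset T), (W ⁻¹' {t} ∩ Xv ⁻¹' (Prod.mk t ⁻¹' s)) := by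
        ext ω
        simp only [Set.mem_preimage, Set.mem_iUnion, Set.mem_inter_iff, Set.mem_singleton_iff,
          Finset.mem_univ, exists_true_left, true_and]
        constructor
        · intro hy; exact ⟨W ω, rfl, hy⟩
        · rintro ⟨t, rfl, hy⟩; exact hy
      rw [hdecomp, measure_biUnion_finset ?_ ?_]
      · intro t _ t' _ htt'
        refine Set.disjoint_left.mpr ?_
        rintro ω ⟨h1, _⟩ ⟨h2, _⟩
        exact htt' (h1.symm.trans h2)
      · intro t _
        exact (hW (measurableSet_singleton t)).inter (hXv (measurable_prodMk_left hs))
    have hQapp : ∀ s : Set (T × (T → ℝ)), MeasurableSet s →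
        Q s = ∑ t : T, κ {t} * ν (Prod.mk t ⁻¹' s) := by
      intro s hs
      rw [hQ_def, Measure.prod_apply hs, lintegral_fintype]
      exact Finset.sum_congr rfl (fun t _ => mul_comm _ _)
    have hne : (Finset.univ.filter (fun t : T => κ {t} ≠ 0)).Nonempty := by
      by_contra hne
      rw [Finset.not_nonempty_iff_eq_empty, Finset.filter_eq_empty_iff] at hne
      have h2 : (∑ t : T, κ {t}) = 0 :=
        Finset.sum_eq_zero (fun t _ => not_not.mp (hne (Finset.mem_univ t)))
      rw [huniv] at h2
      exact one_ne_zero h2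
    obtain ⟨t₀, ht₀F, ht₀min⟩ :=
      Finset.exists_min_image (Finset.univ.filter (fun t : T => κ {t} ≠ 0))
        (fun t => κ {t}) hne
    set ε : ℝ≥0∞ := κ {t₀} with hε_def
    have hε0 : ε ≠ 0 := (Finset.mem_filter.mp ht₀F).2
    have hεtop : ε ≠ ∞ := measure_ne_top κ _
    set r : ℝ≥0 := ε.toNNReal⁻¹ with hr_def
    have htn0 : ε.toNNReal ≠ 0 := by
      simp [ENNReal.toNNReal_eq_zero_iff, hε0, hεtop]
    have hr0 : r ≠ 0 := by simp [hr_def, htn0]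
    have hrε : (r : ℝ≥0∞) = ε⁻¹ := by
      rw [hr_def, ENNReal.coe_inv htn0, ENNReal.coe_toNNReal hεtop]
    have hPQ : P ≤ r • Q := by
      rw [Measure.le_iff]
      intro s hs
      rw [hPapp s hs, Measure.smul_apply, hQapp s hs, ENNReal.smul_def, smul_eq_mul,
        Finset.mul_sum]
      refine Finset.sum_le_sum (fun t _ => ?_)
      by_cases hpt : κ {t} = 0
      · have hle : μ (W ⁻¹' {t} ∩ Xv ⁻¹' (Prod.mk t ⁻¹' s)) ≤ κ {t} := by
          rw [hκ_def, Measure.map_apply hW (measurableSet_singleton t)]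
          exact measure_mono Set.inter_subset_left
        rw [hpt] at hle
        exact le_trans (le_trans hle zero_le) le_rfl
      · have h1 : μ (W ⁻¹' {t} ∩ Xv ⁻¹' (Prod.mk t ⁻¹' s)) ≤ ν (Prod.mk t ⁻¹' s) := by
          rw [hν_def, Measure.map_apply hXv (measurable_prodMk_left hs)]
          exact measure_mono Set.inter_subset_right
        have hεle : ε ≤ κ {t} :=
          ht₀min t (Finset.mem_filter.mpr ⟨Finset.mem_univ t, hpt⟩)
        calc μ (W ⁻¹' {t} ∩ Xv ⁻¹' (Prod.mk t ⁻¹' s)) ≤ ν (Prod.mk t ⁻¹' s) := h1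
          _ = 1 * ν (Prod.mk t ⁻¹' s) := (one_mul _).symm
          _ ≤ ((r : ℝ≥0∞) * κ {t}) * ν (Prod.mk t ⁻¹' s) := by
              refine mul_le_mul_left ?_ _
              calc (1:ℝ≥0∞) = ε⁻¹ * ε := (ENNReal.inv_mul_cancel hε0 hεtop).symm
                _ ≤ ε⁻¹ * κ {t} := mul_le_mul_right hεle _
                _ = (r : ℝ≥0∞) * κ {t} := by rw [hrε]
          _ = (r : ℝ≥0∞) * (κ {t} * ν (Prod.mk t ⁻¹' s)) := by rw [mul_assoc]
    have habs : P ≪ Q := by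
      refine Measure.AbsolutelyContinuous.mk (fun s hs h0s => ?_)
      have h1 := Measure.le_iff.mp hPQ s hs
      rw [Measure.smul_apply, ENNReal.smul_def, smul_eq_mul, h0s, mul_zero] at h1
      exact le_antisymm h1 zero_le
    set g : T × (T → ℝ) → ℝ≥0∞ := P.rnDeriv Q with hg_def
    have hg_meas : Measurable g := Measure.measurable_rnDeriv P Q
    have hg_lt : ∀ᵐ p ∂Q, g p < ∞ := Measure.rnDeriv_lt_top P Q
    have hg_le : ∀ᵐ p ∂Q, g p ≤ (r : ℝ≥0∞) := by
      have h1 : (r⁻¹ : ℝ≥0) • P ≤ Q := by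
        rw [Measure.le_iff]
        intro s hs
        have h2 := Measure.le_iff.mp hPQ s hs
        rw [Measure.smul_apply, ENNReal.smul_def, smul_eq_mul] at h2 ⊢
        calc (↑(r⁻¹) : ℝ≥0∞) * P s ≤ (↑(r⁻¹) : ℝ≥0∞) * ((r : ℝ≥0∞) * Q s) :=
              mul_le_mul_right h2 _
          _ = ((↑(r⁻¹) : ℝ≥0∞) * (r : ℝ≥0∞)) * Q s := by rw [mul_assoc]
          _ = 1 * Q s := by
              rw [ENNReal.coe_inv hr0, ENNReal.inv_mul_cancel]
              · simp [hr0]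
              · exact ENNReal.coe_ne_top
          _ = Q s := one_mul _
      have h3 := Measure.rnDeriv_le_one_of_le h1
      have h4 := Measure.rnDeriv_smul_left P Q r⁻¹
      filter_upwards [h3, h4] with p hp3 hp4
      rw [hp4] at hp3
      rw [Pi.smul_apply, ENNReal.smul_def, smul_eq_mul, ENNReal.coe_inv hr0] at hp3
      calc g p = ((r : ℝ≥0∞) * (r : ℝ≥0∞)⁻¹) * g p := by
            rw [ENNReal.mul_inv_cancel (by simp [hr0]) ENNReal.coe_ne_top, one_mul]
        _ = (r : ℝ≥0∞) * ((r : ℝ≥0∞)⁻¹ * g p) := by rw [mul_assoc]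
        _ ≤ (r : ℝ≥0∞) * 1 := mul_le_mul_right hp3 _
        _ = (r : ℝ≥0∞) := mul_one _
    set G : T × (T → ℝ) → ℝ := fun p => (g p).toReal with hG_def
    set R : ℝ := (r : ℝ) with hR_def
    have hG_meas : Measurable G := hg_meas.ennreal_toReal
    have hG_nonneg : ∀ p, 0 ≤ G p := fun p => ENNReal.toReal_nonneg
    have hG_bdd : ∀ᵐ p ∂Q, G p ≤ R := by
      filter_upwards [hg_le] with p hp
      have := ENNReal.toReal_mono ENNReal.coe_ne_top hp
      rwa [ENNReal.coe_toReal] at this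
    have hPwd : P = Q.withDensity g := (Measure.withDensity_rnDeriv_eq P Q habs).symm
    have hG_int : Integrable G Q := Measure.integrable_toReal_rnDeriv
    have hG_one : ∫ p, G p ∂Q = 1 := by
      rw [hG_def]
      rw [Measure.integral_toReal_rnDeriv habs, probReal_univ]
    have hI_eq : I = ∫ p, Real.log (G p) ∂P := rfl
    have hlogG_int : Integrable (fun p => Real.log (G p)) P := by
      rw [hPwd, integrable_withDensity_iff hg_meas hg_lt]
      refine Integrable.mono' (integrable_const (max 1 (|Real.log R| * R))) ?_ ?_
      · exact ((Real.measurable_log.comp hG_meas).mul hG_meas).aestronglyMeasurable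
      · filter_upwards [hG_bdd] with p hp
        rw [Real.norm_eq_abs]
        exact abs_log_mul_le (hG_nonneg p) hp
    intro l hl
    set e : T × (T → ℝ) → ℝ := fun p => Real.exp (l * p.2 p.1) with he_def
    have he_meas : Measurable e := (heval.const_mul l).exp
    have hinner_meas : ∀ t : T, AEStronglyMeasurable (fun x : T → ℝ => Real.exp (l * x t)) ν :=
      fun t => (Real.measurable_exp.comp (by fun_prop)).aestronglyMeasurable
    have he_int : Integrable e Q := by
      rw [hQ_def]
      refine (integrable_prod_iff he_meas.aestronglyMeasurable).mpr ⟨?_, ?_⟩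
      · refine Filter.Eventually.of_forall (fun t => ?_)
        have h2 : Integrable (fun x : T → ℝ => Real.exp (l * x t)) ν := by
          rw [hν_def]
          exact (integrable_map_measure (hinner_meas t) hXv.aemeasurable).mpr (h t l hl).1
        exact h2
      · exact Integrable.of_finite
    set Z : ℝ := ∫ p, e p ∂Q with hZ_def
    have hZ_pos : 0 < Z := by
      rw [hZ_def, integral_pos_iff_support_of_nonneg (fun p => (Real.exp_pos _).le) he_int]
      have hsupp : Function.support e = Set.univ :=
        Set.eq_univ_of_forall (fun p => (Real.exp_pos _).ne')
      rw [hsupp, measure_univ]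
      exact zero_lt_one
    have hZ_eq : Z = ∑ t : T, (κ {t}).toReal * ∫ ω, Real.exp (l * X t ω) ∂μ := by
      rw [hZ_def, hQ_def, integral_prod _ he_int, integral_fintype Integrable.of_finite]
      refine Finset.sum_congr rfl (fun t _ => ?_)
      rw [smul_eq_mul]
      congr 1
      rw [hν_def, integral_map hXv.aemeasurable (hinner_meas t)]
    have hsum_one : ∑ t : T, (κ {t}).toReal = 1 := by
      have h2 := congrArg ENNReal.toReal huniv
      rw [ENNReal.toReal_sum (fun t _ => measure_ne_top κ _), ENNReal.toReal_one] at h2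
      exact h2
    have hZ_le : Z ≤ Real.exp (ψ l) := by
      rw [hZ_eq]
      calc ∑ t : T, (κ {t}).toReal * ∫ ω, Real.exp (l * X t ω) ∂μ
          ≤ ∑ t : T, (κ {t}).toReal * Real.exp (ψ l) := by
            refine Finset.sum_le_sum (fun t _ =>
              mul_le_mul_of_nonneg_left ?_ ENNReal.toReal_nonneg)
            have hpos : 0 < ∫ ω, Real.exp (l * X t ω) ∂μ := by
              rw [integral_pos_iff_support_of_nonneg (fun ω => (Real.exp_pos _).le) (h t l hl).1]
              have hsupp : Function.support (fun ω => Real.exp (l * X t ω)) = Set.univ :=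
                Set.eq_univ_of_forall (fun ω => (Real.exp_pos _).ne')
              rw [hsupp, measure_univ]
              exact zero_lt_one
            calc ∫ ω, Real.exp (l * X t ω) ∂μ
                = Real.exp (Real.log (∫ ω, Real.exp (l * X t ω) ∂μ)) := (Real.exp_log hpos).symm
              _ ≤ Real.exp (ψ l) := Real.exp_le_exp.mpr (h t l hl).2
        _ = Real.exp (ψ l) := by rw [← Finset.sum_mul, hsum_one, one_mul]
    set c₀ : ℝ := Real.log Z with hc₀_def
    have hc₀ : c₀ ≤ ψ l := by
      rw [hc₀_def, ← Real.log_exp (ψ l)]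
      exact Real.log_le_log hZ_pos hZ_le
    set F : T × (T → ℝ) → ℝ := fun p => l * p.2 p.1 - c₀ with hF2_def
    have hF_meas : Measurable F := (heval.const_mul l).sub measurable_const
    have hFY : Integrable (fun ω => l * X (W ω) ω - c₀) μ :=
      (hint.const_mul l).sub (integrable_const _)
    have hF_int : Integrable F P := by
      rw [hP_def]
      exact (integrable_map_measure hF_meas.aestronglyMeasurable hY.aemeasurable).mpr hFY
    have hF_val : ∫ p, F p ∂P = l * m - c₀ := by
      rw [hP_def, integral_map hY.aemeasurable hF_meas.aestronglyMeasurable]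
      have : (fun ω => F (Y ω)) = fun ω => l * X (W ω) ω - c₀ := rfl
      rw [this, integral_sub (hint.const_mul l) (integrable_const _), integral_const,
        integral_const_mul]
      simp [measure_univ, hm_def]
    have hexpF : (fun p => Real.exp (F p)) = fun p => e p / Z := by
      funext p
      rw [hF2_def, Real.exp_sub, hc₀_def, Real.exp_log hZ_pos]
    have hexpF_int : Integrable (fun p => Real.exp (F p)) Q := by
      rw [hexpF]; exact he_int.div_const Z
    have hexpF_val : ∫ p, Real.exp (F p) ∂Q = 1 := by
      rw [hexpF, integral_div, ← hZ_def, div_self hZ_pos.ne']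
    have hsub_int : Integrable (fun p => F p - Real.log (G p)) P := hF_int.sub hlogG_int
    have hmulG_int : Integrable (fun p => (F p - Real.log (G p)) * G p) Q := by
      have h2 := hsub_int
      rw [hPwd, integrable_withDensity_iff hg_meas hg_lt] at h2
      exact h2
    have hstep1 : ∫ p, (F p - Real.log (G p)) ∂P = ∫ p, (F p - Real.log (G p)) * G p ∂Q := by
      rw [hPwd]
      have hae : g =ᵐ[Q] (fun p => ((g p).toNNReal : ℝ≥0∞)) := by
        filter_upwards [hg_lt] with p hp
        rw [ENNReal.coe_toNNReal hp.ne]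
      rw [withDensity_congr_ae hae,
        integral_withDensity_eq_integral_smul hg_meas.ennreal_toNNReal]
      refine integral_congr_ae (Filter.Eventually.of_forall (fun p => ?_))
      show (g p).toNNReal • (F p - Real.log (G p)) = (F p - Real.log (G p)) * G p
      rw [NNReal.smul_def, mul_comm]
      rfl
    have hstep2 : ∫ p, (F p - Real.log (G p)) * G p ∂Q ≤ ∫ p, (Real.exp (F p) - G p) ∂Q :=
      integral_mono hmulG_int (hexpF_int.sub hG_int)
        (fun p => gibbs_pointwise (F p) (G p) (hG_nonneg p))
    have hstep3 : ∫ p, (Real.exp (F p) - G p) ∂Q = 0 := by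
      rw [integral_sub hexpF_int hG_int, hexpF_val, hG_one, sub_self]
    have hfinal : ∫ p, F p ∂P - I ≤ 0 := by
      rw [hI_eq, ← integral_sub hF_int hlogG_int]
      calc ∫ p, (F p - Real.log (G p)) ∂P
          = ∫ p, (F p - Real.log (G p)) * G p ∂Q := hstep1
        _ ≤ ∫ p, (Real.exp (F p) - G p) ∂Q := hstep2
        _ = 0 := hstep3
    rw [hF_val] at hfinal
    linarith
  -- final part
  have hψ0 : ∀ l : ℝ, 0 ≤ l → 0 ≤ ψ l := psi_nonneg hconv h0 hd
  set S : Set ℝ := {x : ℝ | 0 ≤ x ∧ (I : EReal) ≤ legendre ψ x} with hS_def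
  have hx₀ : max 0 (I + ψ 1) ∈ S := by
    constructor
    · exact le_max_left _ _
    · refine le_trans ?_ (le_iSup (fun l : {l : ℝ // 0 ≤ l} =>
        (((l : ℝ) * max 0 (I + ψ 1) - ψ l : ℝ) : EReal)) ⟨1, zero_le_one⟩)
      rw [EReal.coe_le_coe_iff]
      have := le_max_right 0 (I + ψ 1)
      simp only [one_mul]
      linarith
  refine le_csInf ⟨_, hx₀⟩ ?_
  rintro x ⟨hx0, hxleg⟩
  by_contra hlt
  push_neg at hlt
  set δ : ℝ := m - x with hδ_def
  have hδpos : 0 < δ := by simp only [hδ_def]; linarith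
  have hI0 : I ≤ 0 := by
    by_contra hIpos
    push_neg at hIpos
    set ε : ℝ := I * δ / (2 * (δ + x)) with hε_def
    have hδx : 0 < δ + x := by linarith
    have hεpos : 0 < ε := by
      apply div_pos (mul_pos hIpos hδpos); linarith
    have hlt' : ((I - ε : ℝ) : EReal) < legendre ψ x := by
      refine lt_of_lt_of_le ?_ hxleg
      rw [EReal.coe_lt_coe_iff]; linarith
    rw [legendre, lt_iSup_iff] at hlt'
    obtain ⟨⟨l, hl⟩, hlx⟩ := hlt'
    rw [EReal.coe_lt_coe_iff] at hlx
    have h2 := key l hl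
    have h3 := hψ0 l hl
    have hlδ : l * δ < ε := by simp only [hδ_def] at *; nlinarith
    have h4 : I - ε < l * x := by nlinarith
    have h5 : l * x * δ ≤ ε * x := by nlinarith
    have h6 : (I - ε) * δ < ε * x := by nlinarith
    have h7 : ε * (δ + x) = I * δ / 2 := by
      rw [hε_def]; field_simp
    nlinarith
  have hm0 : m ≤ 0 := by
    refine le_zero_of_le_slope h0 hd (fun l hl => ?_)
    have h2 := key l hl.le
    rw [le_div_iff₀ hl]
    linarith
  linarith
end

section
/- (Two-sided mutual information bound) Under the assumptions of the mutual information bound, if additionally log E[e^{−λX_t}] ≤ ψ(λ) for all λ ≥ 0 and t ∈ T, then |E[X_W]| ≤ (ψ*)^{-1}(I(W; X_T)). -/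
open MeasureTheory ProbabilityTheory Real
open scoped ENNReal

lemma jensen_exp {α : Type*} [MeasurableSpace α] (P : Measure α) [IsProbabilityMeasure P]
    {g : α → ℝ} (hg : Integrable g P) (hexp : Integrable (fun a => Real.exp (g a)) P) :
    ∫ a, g a ∂P ≤ Real.log (∫ a, Real.exp (g a) ∂P) := by
  set m := ∫ a, g a ∂P with hm
  have key : Real.exp m ≤ ∫ a, Real.exp (g a) ∂P := by
    have hint : Integrable (fun a => Real.exp m * (1 + (g a - m))) P :=
      (((hg.sub (integrable_const m)).add (integrable_const 1)).const_mul (Real.exp m)).congr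
        (by filter_upwards with a; simp; ring)
    have hle : ∀ a, Real.exp m * (1 + (g a - m)) ≤ Real.exp (g a) := by
      intro a
      have h1 := Real.add_one_le_exp (g a - m)
      calc Real.exp m * (1 + (g a - m)) ≤ Real.exp m * Real.exp (g a - m) := by
            nlinarith [Real.exp_pos m]
        _ = Real.exp (g a) := by rw [← Real.exp_add]; ring_nf
    have hmono := integral_mono hint hexp hle
    have hcalc : ∫ a, Real.exp m * (1 + (g a - m)) ∂P = Real.exp m := by
      have e : (fun a => Real.exp m * (1 + (g a - m))) = fun a => Real.exp m * (g a + (1 - m)) := by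
        funext a; ring
      rw [e, integral_const_mul (Real.exp m), integral_add hg (integrable_const (1 - m)),
        integral_const]
      simp [← hm]
    rwa [hcalc] at hmono
  calc m = Real.log (Real.exp m) := (Real.log_exp m).symm
    _ ≤ Real.log (∫ a, Real.exp (g a) ∂P) := Real.log_le_log (Real.exp_pos m) key

lemma mul_abs_log_le {u c : ℝ} (hu : 0 ≤ u) (huc : u ≤ c) :
    u * |Real.log u| ≤ 1 + c * |Real.log c| := by
  have hc0 : 0 ≤ c := hu.trans huc
  have hrhs : 0 ≤ c * |Real.log c| := mul_nonneg hc0 (abs_nonneg _)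
  rcases le_or_gt u 1 with h1 | h1
  · rcases eq_or_lt_of_le hu with h0 | h0
    · simp only [← h0, zero_mul]; linarith
    · have hlog : Real.log u ≤ 0 := Real.log_nonpos h0.le h1
      rw [abs_of_nonpos hlog]
      have : Real.log u⁻¹ ≤ u⁻¹ - 1 := Real.log_le_sub_one_of_pos (by positivity)
      rw [Real.log_inv] at this
      have : u * -Real.log u ≤ u * (u⁻¹ - 1) := by
        apply mul_le_mul_of_nonneg_left _ hu; linarith
      have hui : u * (u⁻¹ - 1) = 1 - u := by field_simp
      nlinarith
  · have hlogu : 0 ≤ Real.log u := Real.log_nonneg h1.le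
    rw [abs_of_nonneg hlogu, abs_of_nonneg (Real.log_nonneg (h1.le.trans huc))]
    have : u * Real.log u ≤ c * Real.log c :=
      mul_le_mul huc (Real.log_le_log (by linarith) huc) hlogu hc0
    linarith

lemma integrable_log_rnDeriv {α : Type*} [MeasurableSpace α] (P Q : Measure α)
    [IsProbabilityMeasure P] [IsProbabilityMeasure Q] (hPQ : P ≪ Q)
    {C : ℝ≥0∞} (hC : C ≠ ∞) (hCle : P.rnDeriv Q ≤ᵐ[Q] fun _ => C) :
    Integrable (fun a => Real.log (P.rnDeriv Q a).toReal) P := by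
  have hm : Measurable fun a => Real.log (P.rnDeriv Q a).toReal :=
    Real.measurable_log.comp (Measure.measurable_rnDeriv P Q).ennreal_toReal
  refine ⟨hm.aestronglyMeasurable, ?_⟩
  rw [HasFiniteIntegral]
  set B : ℝ := 1 + C.toReal * |Real.log C.toReal| with hB
  have hkey : ∫⁻ a, ‖Real.log (P.rnDeriv Q a).toReal‖₊ ∂P
      = ∫⁻ a, P.rnDeriv Q a * ‖Real.log (P.rnDeriv Q a).toReal‖₊ ∂Q :=
    (lintegral_rnDeriv_mul hPQ (hm.enorm.aemeasurable)).symm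
  refine (le_of_eq hkey).trans_lt ?_
  have hbound : ∀ᵐ a ∂Q, P.rnDeriv Q a * ‖Real.log (P.rnDeriv Q a).toReal‖₊
      ≤ ENNReal.ofReal B := by
    filter_upwards [hCle, Measure.rnDeriv_lt_top P Q] with a h1 h2
    set u := (P.rnDeriv Q a).toReal with hu
    have hu0 : 0 ≤ u := ENNReal.toReal_nonneg
    have huC : u ≤ C.toReal := ENNReal.toReal_mono hC h1
    have hrd : P.rnDeriv Q a = ENNReal.ofReal u := (ENNReal.ofReal_toReal h2.ne).symm
    rw [hrd]
    have : (‖Real.log u‖₊ : ℝ≥0∞) = ENNReal.ofReal |Real.log u| := by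
      exact Real.enorm_eq_ofReal_abs _
    rw [this, ← ENNReal.ofReal_mul hu0]
    exact ENNReal.ofReal_le_ofReal (mul_abs_log_le hu0 huC)
  calc ∫⁻ a, P.rnDeriv Q a * ‖Real.log (P.rnDeriv Q a).toReal‖₊ ∂Q
      ≤ ∫⁻ _, ENNReal.ofReal B ∂Q := lintegral_mono_ae hbound
    _ = ENNReal.ofReal B := by simp
    _ < ∞ := ENNReal.ofReal_lt_top

lemma gibbs_ineq {α : Type*} [MeasurableSpace α] (P Q : Measure α)
    [IsProbabilityMeasure P] [IsProbabilityMeasure Q] (hPQ : P ≪ Q)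
    (hlog : Integrable (fun a => Real.log (P.rnDeriv Q a).toReal) P)
    {f : α → ℝ} (hfm : Measurable f) (hfP : Integrable f P)
    (hefQ : Integrable (fun a => Real.exp (f a)) Q) {c : ℝ}
    (hc : ∫ a, Real.exp (f a) ∂Q ≤ Real.exp c) :
    ∫ a, f a ∂P ≤ (∫ a, Real.log (P.rnDeriv Q a).toReal ∂P) + c := by
  set r : α → ℝ := fun a => (P.rnDeriv Q a).toReal with hr
  have hrm : Measurable r := (Measure.measurable_rnDeriv P Q).ennreal_toReal
  set g : α → ℝ := fun a => Real.exp (f a) / r a with hg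
  have hgm : Measurable g := (Real.measurable_exp.comp hfm).div hrm
  have hrpos : ∀ᵐ a ∂P, 0 < r a := by
    filter_upwards [Measure.rnDeriv_pos hPQ, hPQ.ae_le (Measure.rnDeriv_lt_top P Q)]
      with a h1 h2
    exact ENNReal.toReal_pos h1.ne' h2.ne
  -- integrability of g with respect to P
  have hgint : Integrable g P := by
    refine ⟨hgm.aestronglyMeasurable, ?_⟩
    rw [HasFiniteIntegral]
    have hkey : ∫⁻ a, ‖g a‖₊ ∂P = ∫⁻ a, P.rnDeriv Q a * ‖g a‖₊ ∂Q :=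
      (lintegral_rnDeriv_mul hPQ (hgm.enorm.aemeasurable)).symm
    refine (le_of_eq hkey).trans_lt ?_
    have hbound : ∀ᵐ a ∂Q, P.rnDeriv Q a * ‖g a‖₊ ≤ ENNReal.ofReal (Real.exp (f a)) := by
      filter_upwards [Measure.rnDeriv_lt_top P Q] with a h2
      rcases eq_or_ne (P.rnDeriv Q a) 0 with h0 | h0
      · simp [h0]
      · have hra : 0 < r a := ENNReal.toReal_pos h0 h2.ne
        have hrd : P.rnDeriv Q a = ENNReal.ofReal (r a) := (ENNReal.ofReal_toReal h2.ne).symm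
        have hnorm : (‖g a‖₊ : ℝ≥0∞) = ENNReal.ofReal (g a) :=
          Real.enorm_eq_ofReal (by positivity)
        rw [hrd, hnorm, ← ENNReal.ofReal_mul hra.le]
        apply ENNReal.ofReal_le_ofReal
        rw [hg]
        rw [mul_div_cancel₀ _ hra.ne']
    calc ∫⁻ a, P.rnDeriv Q a * ‖g a‖₊ ∂Q ≤ ∫⁻ a, ENNReal.ofReal (Real.exp (f a)) ∂Q :=
          lintegral_mono_ae hbound
      _ < ∞ := by
          rw [← hasFiniteIntegral_iff_ofReal (ae_of_all _ (fun a => (Real.exp_pos _).le))]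
          exact hefQ.hasFiniteIntegral
  have hgeq : (fun a => Real.exp (f a - Real.log (r a))) =ᵐ[P] g := by
    filter_upwards [hrpos] with a ha
    rw [Real.exp_sub, Real.exp_log ha]
  have hhint : Integrable (fun a => f a - Real.log (r a)) P := hfP.sub hlog
  have hexph : Integrable (fun a => Real.exp (f a - Real.log (r a))) P :=
    hgint.congr hgeq.symm
  have hJ := jensen_exp P hhint hexph
  have h1 : ∫ a, Real.exp (f a - Real.log (r a)) ∂P = ∫ a, g a ∂P := integral_congr_ae hgeq
  have h2 : ∫ a, g a ∂P = ∫ a, (P.rnDeriv Q a).toReal • g a ∂Q :=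
    (integral_rnDeriv_smul hPQ).symm
  have h3 : ∫ a, (P.rnDeriv Q a).toReal • g a ∂Q ≤ ∫ a, Real.exp (f a) ∂Q := by
    refine integral_mono ((integrable_rnDeriv_smul_iff hPQ).mpr hgint) hefQ (fun a => ?_)
    rcases eq_or_ne (r a) 0 with h0 | h0
    · simp only [smul_eq_mul, hr]
      rw [show (P.rnDeriv Q a).toReal = r a from rfl, h0, zero_mul]
      positivity
    · simp only [smul_eq_mul]
      rw [show (P.rnDeriv Q a).toReal = r a from rfl, hg, mul_div_cancel₀ _ h0]
  have hpos : 0 < ∫ a, Real.exp (f a - Real.log (r a)) ∂P := integral_exp_pos hexph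
  have hsub : ∫ a, (f a - Real.log (r a)) ∂P
      = ∫ a, f a ∂P - ∫ a, Real.log (r a) ∂P := integral_sub hfP hlog
  have hfin : Real.log (∫ a, Real.exp (f a - Real.log (r a)) ∂P) ≤ c := by
    rw [← Real.log_exp c]
    exact Real.log_le_log hpos (by rw [h1, h2] at *; linarith)
  rw [hsub] at hJ
  linarith

lemma endgame {ψ : ℝ → ℝ} (hconv : ConvexOn ℝ (Set.Ici 0) ψ) (h0 : ψ 0 = 0)
    (hd : HasDerivWithinAt ψ 0 (Set.Ici 0) 0) {M I : ℝ} (hM0 : 0 ≤ M)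
    (K : ∀ l : ℝ, 0 ≤ l → l * M ≤ I + ψ l) :
    M ≤ legendreInv ψ I := by
  have hslope : Filter.Tendsto (slope ψ 0) (nhdsWithin 0 (Set.Ioi 0)) (nhds 0) := by
    have h := hasDerivWithinAt_iff_tendsto_slope.mp hd
    rwa [Set.Ici_sdiff_left] at h
  have hψnn : ∀ l : ℝ, 0 ≤ l → 0 ≤ ψ l := by
    intro l hl
    rcases hl.eq_or_lt with rfl | hl
    · simp [h0]
    · have hev : ∀ᶠ t in nhdsWithin 0 (Set.Ioi 0), slope ψ 0 t ≤ slope ψ 0 l := by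
        filter_upwards [Ioc_mem_nhdsGT_of_mem (Set.mem_Ico.mpr ⟨le_refl 0, hl⟩)] with t ht
        simp only [slope_def_field]
        exact hconv.secant_mono Set.self_mem_Ici (Set.mem_Ici.mpr ht.1.le)
          (Set.mem_Ici.mpr hl.le) ht.1.ne' hl.ne' ht.2
      have h0le : (0:ℝ) ≤ slope ψ 0 l := le_of_tendsto hslope hev
      rw [slope_def_field, h0] at h0le
      have : ψ l = (ψ l - 0) / (l - 0) * l := by field_simp; ring
      rw [this]
      exact mul_nonneg h0le hl.le
  refine le_csInf ⟨max 0 (I + ψ 1), le_max_left 0 _, ?_⟩ ?_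
  · refine le_trans ?_ (le_iSup
      (fun l : {l : ℝ // 0 ≤ l} => (((l : ℝ) * max 0 (I + ψ 1) - ψ l : ℝ) : EReal))
      ⟨1, zero_le_one⟩)
    rw [EReal.coe_le_coe_iff]
    have := le_max_right 0 (I + ψ 1)
    simp only []
    linarith [this]
  · rintro x ⟨hx0, hxI⟩
    by_contra hcon
    push_neg at hcon
    have hMx : 0 < M - x := by linarith
    have hquant : ∀ ε : ℝ, 0 < ε → I * (M - x) ≤ ε * M := by
      intro ε hε
      have hlt : ((I - ε : ℝ) : EReal) < legendre ψ x :=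
        lt_of_lt_of_le (EReal.coe_lt_coe_iff.mpr (by linarith)) hxI
      rw [legendre, lt_iSup_iff] at hlt
      obtain ⟨⟨l, hl0⟩, hl⟩ := hlt
      rw [EReal.coe_lt_coe_iff] at hl
      have hK := K l hl0
      have hψ := hψnn l hl0
      have e1 : l * (M - x) < ε := by nlinarith
      have e2 : I - ε < l * x := by nlinarith
      nlinarith [mul_lt_mul_of_pos_right e2 hMx, mul_le_mul_of_nonneg_right e1.le hx0]
    have hI0 : I ≤ 0 := by
      by_contra hI
      push_neg at hI
      have hMpos : 0 < M := lt_of_le_of_lt hx0 hcon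
      have hq := hquant (I * (M - x) / (2 * M)) (div_pos (mul_pos hI hMx) (by positivity))
      rw [div_mul_eq_mul_div, mul_div_assoc] at hq
      have hhalf : M / (2 * M) = 1 / 2 := by
        field_simp
      rw [hhalf] at hq
      nlinarith [mul_pos hI hMx]
    have hMle : M ≤ 0 := by
      refine ge_of_tendsto hslope ?_
      filter_upwards [self_mem_nhdsWithin] with t ht
      have hK := K t (le_of_lt ht)
      rw [slope_def_field, h0]
      rw [le_div_iff₀ (by simpa using ht)]
      have : (t : ℝ) ∈ Set.Ioi (0:ℝ) := ht
      nlinarith [this]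
    linarith

/-- Two-sided mutual information bound: if additionally `log E[e^{−λ X_t}] ≤ ψ(λ)` for
`λ ≥ 0`, then `|E[X_W]| ≤ (ψ*)⁻¹(I(W ; X_T))`. -/
theorem two_sided_mutual_information_bound {Ω T : Type*} [MeasurableSpace Ω]
    (μ : Measure Ω) [IsProbabilityMeasure μ] [Fintype T] [Nonempty T]
    [MeasurableSpace T] [MeasurableSingletonClass T]
    (X : T → Ω → ℝ) (hmeas : ∀ t, Measurable (X t))
    (ψ : ℝ → ℝ) (hconv : ConvexOn ℝ (Set.Ici 0) ψ) (h0 : ψ 0 = 0)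
    (hd : HasDerivWithinAt ψ 0 (Set.Ici 0) 0)
    (h : ∀ t, ∀ l : ℝ, 0 ≤ l → Integrable (fun ω => Real.exp (l * X t ω)) μ ∧
      Real.log (∫ ω, Real.exp (l * X t ω) ∂μ) ≤ ψ l)
    (hneg : ∀ t, ∀ l : ℝ, 0 ≤ l → Integrable (fun ω => Real.exp (-l * X t ω)) μ ∧
      Real.log (∫ ω, Real.exp (-l * X t ω) ∂μ) ≤ ψ l)
    (W : Ω → T) (hW : Measurable W) :
    |∫ ω, X (W ω) ω ∂μ| ≤
      legendreInv ψ (mutualInfoReal μ W (fun ω => fun t => X t ω)) := by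
  classical
  set Y : Ω → (T → ℝ) := fun ω => fun t => X t ω with hYdef
  have hYm : Measurable Y := measurable_pi_lambda _ hmeas
  have hWYm : Measurable fun ω => (W ω, Y ω) := hW.prodMk hYm
  set P : Measure (T × (T → ℝ)) := μ.map (fun ω => (W ω, Y ω)) with hPdef
  set Q : Measure (T × (T → ℝ)) := (μ.map W).prod (μ.map Y) with hQdef
  haveI : IsProbabilityMeasure (μ.map W) := Measure.isProbabilityMeasure_map hW.aemeasurable
  haveI : IsProbabilityMeasure (μ.map Y) := Measure.isProbabilityMeasure_map hYm.aemeasurable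
  haveI : IsProbabilityMeasure P := Measure.isProbabilityMeasure_map hWYm.aemeasurable
  haveI : IsProbabilityMeasure Q := by rw [hQdef]; infer_instance
  -- the constant C
  set α : T → ℝ≥0∞ := fun t => μ.map W {t} with hα
  set C : ℝ≥0∞ := ∑ t : T, (if α t = 0 then 0 else (α t)⁻¹) with hC
  have hαtop : ∀ t, α t ≠ ∞ := fun t => measure_ne_top _ _
  have hCtop : C ≠ ∞ := by
    rw [hC]
    refine (ENNReal.sum_lt_top.mpr fun t _ => ?_).ne
    split_ifs with hz
    · exact ENNReal.zero_lt_top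
    · exact ENNReal.inv_lt_top.mpr (pos_iff_ne_zero.mpr hz)
  have hCge : ∀ t, α t ≠ 0 → (α t)⁻¹ ≤ C := by
    intro t ht
    rw [hC]
    have := Finset.single_le_sum (f := fun t => (if α t = 0 then 0 else (α t)⁻¹))
      (fun i _ => zero_le) (Finset.mem_univ t)
    simpa only [if_neg ht] using this
  have hCne : C ≠ 0 := by
    have hsum : ∑ t : T, α t = 1 := by
      rw [hα]
      have : ∑ t : T, (μ.map W) {t} = ∫⁻ _, 1 ∂(μ.map W) := by
        rw [lintegral_fintype]
        simp
      rw [this, lintegral_one, measure_univ]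
    have : ∃ t, α t ≠ 0 := by
      by_contra hall
      push_neg at hall
      simp only [hall] at hsum
      simp at hsum
    obtain ⟨t, ht⟩ := this
    intro hC0
    have := hCge t ht
    rw [hC0, le_zero_iff, ENNReal.inv_eq_zero] at this
    exact hαtop t this
  -- P is dominated by C • Q
  have hPCQ : P ≤ C • Q := by
    refine Measure.le_iff.mpr fun s hs => ?_
    have hPs : P s = μ ((fun ω => (W ω, Y ω)) ⁻¹' s) := by
      rw [hPdef, Measure.map_apply hWYm hs]
    have hsub : (fun ω => (W ω, Y ω)) ⁻¹' s
        ⊆ ⋃ t : T, (W ⁻¹' {t} ∩ Y ⁻¹' (Prod.mk t ⁻¹' s)) := by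
      intro ω hω
      exact Set.mem_iUnion.mpr ⟨W ω, ⟨rfl, hω⟩⟩
    have hP1 : P s ≤ ∑ t : T, μ (W ⁻¹' {t} ∩ Y ⁻¹' (Prod.mk t ⁻¹' s)) := by
      rw [hPs]
      exact (measure_mono hsub).trans (measure_iUnion_fintype_le _ _)
    have hQs : Q s = ∑ t : T, α t * (μ.map Y) (Prod.mk t ⁻¹' s) := by
      rw [hQdef, Measure.prod_apply hs, lintegral_fintype]
      exact Finset.sum_congr rfl fun t _ => mul_comm _ _
    rw [Measure.smul_apply, smul_eq_mul, hQs, Finset.mul_sum]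
    refine hP1.trans (Finset.sum_le_sum fun t _ => ?_)
    rcases eq_or_ne (α t) 0 with hz | hz
    · have hWt : μ (W ⁻¹' {t}) = 0 := by
        have : α t = μ (W ⁻¹' {t}) := by
          rw [hα]
          exact Measure.map_apply hW (measurableSet_singleton t)
        rw [← this, hz]
      calc μ (W ⁻¹' {t} ∩ Y ⁻¹' (Prod.mk t ⁻¹' s)) ≤ μ (W ⁻¹' {t}) :=
            measure_mono Set.inter_subset_left
        _ = 0 := hWt
        _ ≤ _ := zero_le
    · calc μ (W ⁻¹' {t} ∩ Y ⁻¹' (Prod.mk t ⁻¹' s))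
          ≤ μ (Y ⁻¹' (Prod.mk t ⁻¹' s)) := measure_mono Set.inter_subset_right
        _ = (μ.map Y) (Prod.mk t ⁻¹' s) :=
            (Measure.map_apply hYm (measurable_prodMk_left hs)).symm
        _ = (α t)⁻¹ * (α t * (μ.map Y) (Prod.mk t ⁻¹' s)) := by
            rw [← mul_assoc, ENNReal.inv_mul_cancel hz (hαtop t), one_mul]
        _ ≤ C * (α t * (μ.map Y) (Prod.mk t ⁻¹' s)) :=
            mul_le_mul_left (hCge t hz) _
  have hPQ : P ≪ Q := Measure.absolutelyContinuous_of_le_smul hPCQ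
  -- bound on the Radon-Nikodym derivative
  haveI hfinCQ : IsFiniteMeasure (C • Q) := by
    refine ⟨?_⟩
    rw [Measure.smul_apply, smul_eq_mul]
    exact ENNReal.mul_lt_top hCtop.lt_top (measure_lt_top Q _)
  have h1 : P.rnDeriv (C • Q) ≤ᵐ[C • Q] 1 := Measure.rnDeriv_le_one_of_le hPCQ
  have h1' : P.rnDeriv (C • Q) ≤ᵐ[Q] 1 :=
    (Measure.absolutelyContinuous_smul hCne).ae_le h1
  have h2 : P.rnDeriv (C • Q) =ᵐ[Q] C⁻¹ • P.rnDeriv Q :=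
    Measure.rnDeriv_smul_right_of_ne_top P Q hCne hCtop
  have hrnC : P.rnDeriv Q ≤ᵐ[Q] fun _ => C := by
    filter_upwards [h1', h2] with p hp1 hp2
    rw [hp2] at hp1
    simp only [Pi.smul_apply, smul_eq_mul, Pi.one_apply] at hp1
    calc P.rnDeriv Q p = C * (C⁻¹ * P.rnDeriv Q p) := by
          rw [← mul_assoc, ENNReal.mul_inv_cancel hCne hCtop, one_mul]
      _ ≤ C * 1 := mul_le_mul_right hp1 _
      _ = C := mul_one C
  have hlogint : Integrable (fun p => Real.log (P.rnDeriv Q p).toReal) P :=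
    integrable_log_rnDeriv P Q hPQ hCtop hrnC
  -- integrability of the X's
  have hXint : ∀ t, Integrable (X t) μ := by
    intro t
    have h1 := (h t 1 zero_le_one).1
    have h2 := (hneg t 1 zero_le_one).1
    refine (h1.add h2).mono' (hmeas t).aestronglyMeasurable ?_
    filter_upwards with ω
    rw [Real.norm_eq_abs, abs_le]
    simp only [Pi.add_apply]
    constructor <;>
      nlinarith [Real.add_one_le_exp (1 * X t ω), Real.add_one_le_exp (-1 * X t ω),
        Real.exp_pos (1 * X t ω), Real.exp_pos (-1 * X t ω)]
  have hXWrep : (fun ω => X (W ω) ω) = fun ω => ∑ t : T, if W ω = t then X t ω else 0 := by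
    funext ω
    rw [Finset.sum_ite_eq]
    simp
  have hXWm : Measurable fun ω => X (W ω) ω := by
    rw [hXWrep]
    exact Finset.measurable_sum _ fun t _ =>
      Measurable.ite (hW (measurableSet_singleton t)) (hmeas t) measurable_const
  have hXW : Integrable (fun ω => X (W ω) ω) μ := by
    rw [hXWrep]
    refine integrable_finset_sum _ fun t _ => ?_
    have : (fun ω => if W ω = t then X t ω else 0)
        = Set.indicator (W ⁻¹' {t}) (X t) := by
      funext ω
      simp [Set.indicator_apply]
    rw [this]
    exact (hXint t).indicator (hW (measurableSet_singleton t))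
  -- the core inequality via the Gibbs variational argument
  have core : ∀ (c b : ℝ), (∀ t, Integrable (fun ω => Real.exp (c * X t ω)) μ) →
      (∀ t, Real.log (∫ ω, Real.exp (c * X t ω) ∂μ) ≤ b) →
      c * ∫ ω, X (W ω) ω ∂μ ≤ (∫ p, Real.log (P.rnDeriv Q p).toReal ∂P) + b := by
    intro c b hint hbd
    set F : T × (T → ℝ) → ℝ := fun p => c * p.2 p.1 with hF
    have hFm : Measurable F := by
      have e : F = fun p => ∑ t : T, if p.1 = t then c * p.2 t else 0 := by
        funext p
        rw [Finset.sum_ite_eq]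
        simp [hF]
      rw [e]
      exact Finset.measurable_sum _ fun t _ =>
        Measurable.ite (measurable_fst (measurableSet_singleton t))
          (by fun_prop) measurable_const
    have hexpt : ∀ t : T, Integrable (fun y : T → ℝ => Real.exp (c * y t)) (μ.map Y) := by
      intro t
      rw [integrable_map_measure (((measurable_pi_apply t).const_mul c).exp).aestronglyMeasurable
        hYm.aemeasurable]
      exact hint t
    have hval : ∀ t : T, ∫ y, Real.exp (c * y t) ∂(μ.map Y) = ∫ ω, Real.exp (c * X t ω) ∂μ := by
      intro t
      rw [integral_map hYm.aemeasurable
        (((measurable_pi_apply t).const_mul c).exp).aestronglyMeasurable]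
    have hFexpQ : Integrable (fun p => Real.exp (F p)) Q := by
      rw [hQdef]
      refine (integrable_prod_iff hFm.exp.aestronglyMeasurable).mpr ⟨?_, ?_⟩
      · exact ae_of_all _ fun t => hexpt t
      · exact Integrable.of_finite
    have hFQval : ∫ p, Real.exp (F p) ∂Q ≤ Real.exp b := by
      rw [hQdef] at hFexpQ ⊢
      rw [integral_prod _ hFexpQ]
      have hle : ∀ t : T, ∫ y, Real.exp (c * y t) ∂(μ.map Y) ≤ Real.exp b := by
        intro t
        rw [hval t]
        have hpos : 0 < ∫ ω, Real.exp (c * X t ω) ∂μ := integral_exp_pos (hint t)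
        exact (Real.log_le_iff_le_exp hpos).mp (hbd t)
      calc ∫ t, (∫ y, Real.exp (F (t, y)) ∂(μ.map Y)) ∂(μ.map W)
          ≤ ∫ _, Real.exp b ∂(μ.map W) :=
            integral_mono Integrable.of_finite (integrable_const _) hle
        _ = Real.exp b := by simp
    have hFP : Integrable F P := by
      rw [hPdef, integrable_map_measure hFm.aestronglyMeasurable hWYm.aemeasurable]
      exact hXW.const_mul c
    have hFPval : ∫ p, F p ∂P = c * ∫ ω, X (W ω) ω ∂μ := by
      rw [hPdef, integral_map hWYm.aemeasurable hFm.aestronglyMeasurable]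
      exact integral_const_mul c _
    have hgibbs := gibbs_ineq P Q hPQ hlogint hFm hFP hFexpQ hFQval
    rw [hFPval] at hgibbs
    exact hgibbs
  -- the key inequality
  have hIeq : mutualInfoReal μ W Y = ∫ p, Real.log (P.rnDeriv Q p).toReal ∂P := rfl
  have K : ∀ l : ℝ, 0 ≤ l → l * |∫ ω, X (W ω) ω ∂μ|
      ≤ mutualInfoReal μ W Y + ψ l := by
    intro l hl
    rw [hIeq]
    have hpos := core l (ψ l) (fun t => (h t l hl).1) (fun t => (h t l hl).2)
    have hneg' := core (-l) (ψ l) (fun t => (hneg t l hl).1) (fun t => (hneg t l hl).2)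
    rcases abs_cases (∫ ω, X (W ω) ω ∂μ) with ⟨he, _⟩ | ⟨he, _⟩
    · rw [he]
      exact hpos
    · rw [he]
      have : l * -(∫ ω, X (W ω) ω ∂μ) = -l * ∫ ω, X (W ω) ω ∂μ := by ring
      rw [this]
      exact hneg'
  exact endgame hconv h0 hd (abs_nonneg _) K
end

section
/- (Tail bound for algorithm output) Let T be a finite set, each X_t centered σ²-subgaussian, and W a T-valued random variable. Then for all x ≥ 0, P[X_W ≥ √(2σ² I(W;X_T)) + x] ≤ exp(log|T| − I(W;X_T) − x²/(2σ²)). -/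
open MeasureTheory ProbabilityTheory Real

/-- Chernoff bound for a subgaussian random variable. -/
lemma subgaussian_tail_aux {Ω : Type*} [MeasurableSpace Ω] (μ : Measure Ω)
    [IsProbabilityMeasure μ] (X : Ω → ℝ) (σ : ℝ) (hσ : 0 < σ)
    (hsub : ∀ l : ℝ, Integrable (fun ω => Real.exp (l * X ω)) μ ∧
      ∫ ω, Real.exp (l * X ω) ∂μ ≤ Real.exp (l ^ 2 * σ ^ 2 / 2))
    (a : ℝ) (ha : 0 ≤ a) :
    μ {ω | a ≤ X ω} ≤ ENNReal.ofReal (Real.exp (-(a ^ 2) / (2 * σ ^ 2))) := by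
  have hl : (0:ℝ) ≤ a / σ ^ 2 := div_nonneg ha (by positivity)
  have h := measure_ge_le_exp_mul_mgf (X := X) (μ := μ) (t := a / σ ^ 2) a hl (hsub _).1
  have hmgf : mgf X μ (a / σ ^ 2) ≤ Real.exp ((a / σ ^ 2) ^ 2 * σ ^ 2 / 2) := (hsub _).2
  rw [ENNReal.le_ofReal_iff_toReal_le (measure_ne_top _ _) (Real.exp_pos _).le]
  calc (μ {ω | a ≤ X ω}).toReal ≤ exp (-(a / σ ^ 2) * a) * mgf X μ (a / σ ^ 2) := h
    _ ≤ exp (-(a / σ ^ 2) * a) * exp ((a / σ ^ 2) ^ 2 * σ ^ 2 / 2) := by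
        gcongr
    _ = exp (-(a ^ 2) / (2 * σ ^ 2)) := by
        rw [← Real.exp_add]; congr 1; field_simp; ring

/-- Tail bound for the algorithm output: for centered `σ²`-subgaussian `X_t`, `t` in a
finite set `T`, and `T`-valued `W`, for all `x ≥ 0`,
`P[X_W ≥ √(2σ² I(W;X_T)) + x] ≤ exp(log|T| − I(W;X_T) − x²/(2σ²))`. -/
theorem tail_bound_subgaussian {Ω T : Type*} [MeasurableSpace Ω]
    (μ : Measure Ω) [IsProbabilityMeasure μ] [Fintype T] [Nonempty T]
    [MeasurableSpace T] [MeasurableSingletonClass T]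
    (X : T → Ω → ℝ) (σ : ℝ) (hσ : 0 < σ) (hmeas : ∀ t, Measurable (X t))
    (hcent : ∀ t, Integrable (X t) μ ∧ ∫ ω, X t ω ∂μ = 0)
    (hsub : ∀ t, ∀ l : ℝ, Integrable (fun ω => Real.exp (l * X t ω)) μ ∧
      ∫ ω, Real.exp (l * X t ω) ∂μ ≤ Real.exp (l ^ 2 * σ ^ 2 / 2))
    (W : Ω → T) (hW : Measurable W) :
    ∀ x : ℝ, 0 ≤ x →
      μ {ω | Real.sqrt (2 * σ ^ 2 * mutualInfoReal μ W (fun ω => fun t => X t ω)) + x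
          ≤ X (W ω) ω} ≤
        ENNReal.ofReal (Real.exp (Real.log (Fintype.card T)
          - mutualInfoReal μ W (fun ω => fun t => X t ω) - x ^ 2 / (2 * σ ^ 2))) := by
  intro x hx
  set I : ℝ := mutualInfoReal μ W (fun ω => fun t => X t ω) with hI
  set a : ℝ := Real.sqrt (2 * σ ^ 2 * I) + x with haa
  have ha : 0 ≤ a := add_nonneg (Real.sqrt_nonneg _) hx
  have hcard : (0:ℝ) < Fintype.card T := by
    exact_mod_cast Fintype.card_pos
  -- union bound
  have hsubset : {ω | a ≤ X (W ω) ω} ⊆ ⋃ t : T, {ω | a ≤ X t ω} := by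
    intro ω hω
    exact Set.mem_iUnion.mpr ⟨W ω, hω⟩
  have h1 : μ {ω | a ≤ X (W ω) ω} ≤ ∑ t : T, μ {ω | a ≤ X t ω} :=
    (measure_mono hsubset).trans (measure_iUnion_fintype_le _ _)
  have h2 : ∑ t : T, μ {ω | a ≤ X t ω}
      ≤ ∑ _t : T, ENNReal.ofReal (Real.exp (-(a ^ 2) / (2 * σ ^ 2))) := by
    refine Finset.sum_le_sum fun t _ => ?_
    exact subgaussian_tail_aux μ (X t) σ hσ (hsub t) a ha
  have h3 : (∑ _t : T, ENNReal.ofReal (Real.exp (-(a ^ 2) / (2 * σ ^ 2))))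
      = ENNReal.ofReal ((Fintype.card T : ℝ) * Real.exp (-(a ^ 2) / (2 * σ ^ 2))) := by
    rw [Finset.sum_const, Finset.card_univ, nsmul_eq_mul,
      ENNReal.ofReal_mul (by positivity)]
    simp
  refine (h1.trans (h2.trans_eq h3)).trans (ENNReal.ofReal_le_ofReal ?_)
  -- real inequality
  have hkey : I + x ^ 2 / (2 * σ ^ 2) ≤ a ^ 2 / (2 * σ ^ 2) := by
    rcases le_or_gt 0 I with hI0 | hI0
    · have hs : Real.sqrt (2 * σ ^ 2 * I) ^ 2 = 2 * σ ^ 2 * I :=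
        Real.sq_sqrt (by positivity)
      have hσ2 : (0:ℝ) < 2 * σ ^ 2 := by positivity
      rw [le_div_iff₀ hσ2]
      have hx2 : x ^ 2 / (2 * σ ^ 2) * (2 * σ ^ 2) = x ^ 2 := div_mul_cancel₀ _ hσ2.ne'
      have hs0 : 0 ≤ Real.sqrt (2 * σ ^ 2 * I) := Real.sqrt_nonneg _
      have haa2 : a ^ 2 = Real.sqrt (2 * σ ^ 2 * I) ^ 2
          + 2 * Real.sqrt (2 * σ ^ 2 * I) * x + x ^ 2 := by rw [haa]; ring
      nlinarith [mul_nonneg (mul_nonneg hs0 hx) hσ2.le]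
    · have hs : Real.sqrt (2 * σ ^ 2 * I) = 0 := by
        apply Real.sqrt_eq_zero'.mpr
        nlinarith
      rw [haa, hs, zero_add]
      have : I ≤ 0 := hI0.le
      have hσ2 : (0:ℝ) < 2 * σ ^ 2 := by positivity
      nlinarith [div_nonneg (sq_nonneg x) hσ2.le]
  calc (Fintype.card T : ℝ) * Real.exp (-(a ^ 2) / (2 * σ ^ 2))
      = Real.exp (Real.log (Fintype.card T) - a ^ 2 / (2 * σ ^ 2)) := by
        rw [Real.exp_sub, Real.exp_log hcard, eq_div_iff (Real.exp_ne_zero _), mul_assoc,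
          ← Real.exp_add, neg_div, neg_add_cancel, Real.exp_zero, mul_one]
    _ ≤ Real.exp (Real.log (Fintype.card T) - I - x ^ 2 / (2 * σ ^ 2)) := by
        apply Real.exp_le_exp.mpr; linarith
end

section
/- (One chaining step bound) Let {X_t}_{t∈T} be a subgaussian process on a metric space (T,d), i.e., E[X_t]=0 and E[e^{λ(X_t−X_s)}] ≤ e^{λ²d(t,s)²/2} for all t,s ∈ T and λ ≥ 0. Let N_k and N_{k−1} be 2^{−k}- and 2^{−(k−1)}-nets with projections π_k, π_{k−1}, and W a T-valued random variable. Then E[X_{π_k(W)} − X_{π_{k−1}(W)}] ≤ 3·2^{−k}·√(2 I((π_k(W), π_{k−1}(W)); X_T)). -/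
open MeasureTheory ProbabilityTheory Real

open scoped ENNReal NNReal

lemma aux_mul_neg_log (a : ℝ) (ha : 0 ≤ a) : a * max (-Real.log a) 0 ≤ Real.exp (-1) := by
  rcases le_or_gt a 0 with h | h
  · have : a = 0 := le_antisymm h ha
    simp [this]
    positivity
  rcases le_or_gt 1 a with h1 | h1
  · have : max (-Real.log a) 0 = 0 := max_eq_right (by simpa using Real.log_nonneg h1)
    simp [this]
    positivity
  · set y := -Real.log a with hy
    have hya : a = Real.exp (-y) := by rw [hy, neg_neg, Real.exp_log h]
    have hy0 : 0 ≤ y := by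
      rw [hy]; simpa using (Real.log_nonpos h.le h1.le)
    have hmax : max (-Real.log a) 0 = y := max_eq_left (by rw [← hy]; exact hy0)
    rw [hmax, hya]
    have h2 : y ≤ Real.exp (y - 1) := by
      have := Real.add_one_le_exp (y - 1)
      linarith
    calc Real.exp (-y) * y ≤ Real.exp (-y) * Real.exp (y - 1) := by
          exact mul_le_mul_of_nonneg_left h2 (Real.exp_pos _).le
      _ = Real.exp (-1) := by rw [← Real.exp_add]; ring_nf

lemma aux_jensen_exp {α : Type*} [MeasurableSpace α] (P : Measure α) [IsProbabilityMeasure P]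
    (f : α → ℝ) (hf : Integrable f P) (hef : Integrable (fun x => Real.exp (f x)) P) :
    Real.exp (∫ x, f x ∂P) ≤ ∫ x, Real.exp (f x) ∂P := by
  have := convexOn_exp.map_integral_le (f := f) (μ := P)
    continuous_exp.continuousOn isClosed_univ (by simp) hf hef
  simpa using this

lemma aux_opt (E I σ : ℝ) (hσ : 0 < σ)
    (h : ∀ l : ℝ, 0 ≤ l → l * E ≤ I + l ^ 2 * σ ^ 2 / 2) :
    E ≤ σ * Real.sqrt (2 * I) := by
  have hI : 0 ≤ I := by have := h 0 le_rfl; simpa using this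
  rcases le_or_gt E 0 with hE | hE
  · exact hE.trans (by positivity)
  rcases eq_or_lt_of_le hI with hI0 | hI0
  · exfalso
    have hl : (0:ℝ) ≤ E / σ ^ 2 := by positivity
    have h2 := h (E / σ ^ 2) hl
    rw [← hI0] at h2
    have hσ2 : (0:ℝ) < σ ^ 2 := by positivity
    have h3 := mul_le_mul_of_nonneg_right h2 hσ2.le
    have h4 : E * E ≤ E * E / σ ^ 2 * σ ^ 2 / 2 := by
      calc E * E = E / σ ^ 2 * E * σ ^ 2 := by field_simp
        _ ≤ (0 + (E / σ ^ 2) ^ 2 * σ ^ 2 / 2) * σ ^ 2 := h3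
        _ = E * E / σ ^ 2 * σ ^ 2 / 2 := by field_simp; ring
    have h5 : E * E / σ ^ 2 * σ ^ 2 = E * E := by field_simp
    rw [h5] at h4
    nlinarith
  · set s := Real.sqrt (2 * I) with hs
    have hs2 : s ^ 2 = 2 * I := Real.sq_sqrt (by linarith)
    have hs0 : 0 < s := Real.sqrt_pos.mpr (by linarith)
    have hl : (0:ℝ) ≤ s / σ := by positivity
    have := h (s / σ) hl
    have h2 : (s / σ) ^ 2 * σ ^ 2 = s ^ 2 := by field_simp
    rw [h2, hs2] at this
    -- this : s / σ * E ≤ I + 2 * I / 2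
    have h3 : s * E ≤ σ * s ^ 2 := by
      have := mul_le_mul_of_nonneg_left this hσ.le
      rw [mul_add] at this
      calc s * E = σ * (s / σ * E) := by field_simp
        _ ≤ σ * I + σ * (2 * I / 2) := by linarith
        _ = σ * s ^ 2 := by rw [hs2]; ring
    have := (mul_le_mul_iff_right₀ hs0).mp (by linarith [h3] : s * E ≤ s * (σ * s))
    linarith

lemma aux_DV {α : Type*} [MeasurableSpace α] (P Q : Measure α)
    [IsProbabilityMeasure P] [IsProbabilityMeasure Q]
    (c : ℝ≥0∞) (hc0 : c ≠ 0) (hctop : c ≠ ⊤) (hc1 : 1 ≤ c) (hPQ : P ≤ c • Q)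
    (f : α → ℝ) (hfm : Measurable f) (hfi : Integrable f P)
    (hefQ : Integrable (fun x => Real.exp (f x)) Q) (B : ℝ)
    (hB : ∫ x, Real.exp (f x) ∂Q ≤ B) :
    ∫ x, f x ∂P ≤ (∫ x, Real.log (P.rnDeriv Q x).toReal ∂P) + Real.log B := by
  have hac : P ≪ Q := by
    refine Measure.AbsolutelyContinuous.mk fun A hA h0 => ?_
    have h1 := Measure.le_iff'.mp hPQ A
    rw [Measure.smul_apply, h0, smul_eq_mul, mul_zero] at h1
    exact le_antisymm h1 zero_le
  set r := P.rnDeriv Q with hr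
  have hrm : Measurable r := Measure.measurable_rnDeriv _ _
  have hPr : Q.withDensity r = P := Measure.withDensity_rnDeriv_eq P Q hac
  have hrtop : ∀ᵐ x ∂Q, r x < ⊤ := Measure.rnDeriv_lt_top P Q
  haveI : IsFiniteMeasure (c • Q) := by
    refine ⟨?_⟩
    rw [Measure.smul_apply, smul_eq_mul]
    exact ENNReal.mul_lt_top hctop.lt_top (measure_lt_top Q _)
  have hrc : ∀ᵐ x ∂Q, r x ≤ c := by
    have h1 : P.rnDeriv (c • Q) ≤ᵐ[c • Q] 1 := Measure.rnDeriv_le_one_of_le hPQ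
    have hQc : Q ≪ c • Q := Measure.absolutelyContinuous_smul hc0
    have h1' : P.rnDeriv (c • Q) ≤ᵐ[Q] 1 := hQc.ae_le h1
    have h2 : P.rnDeriv (c • Q) =ᵐ[Q] c⁻¹ • P.rnDeriv Q :=
      Measure.rnDeriv_smul_right_of_ne_top P Q hc0 hctop
    filter_upwards [h1', h2] with x hx1 hx2
    have hx3 : c⁻¹ * r x ≤ 1 := by
      rw [hx2] at hx1; simpa using hx1
    calc r x = c * c⁻¹ * r x := by rw [ENNReal.mul_inv_cancel hc0 hctop, one_mul]
      _ = c * (c⁻¹ * r x) := mul_assoc _ _ _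
      _ ≤ c * 1 := mul_le_mul_right hx3 _
      _ = c := mul_one c
  have hrcP : ∀ᵐ x ∂P, r x ≤ c := hac.ae_le hrc
  set L := fun x => Real.log (r x).toReal with hL
  have hLm : Measurable L := Real.measurable_log.comp hrm.ennreal_toReal
  set M := Real.log c.toReal with hM
  have hc1' : (1:ℝ) ≤ c.toReal := by
    have := ENNReal.toReal_mono hctop hc1
    simpa using this
  have hM0 : 0 ≤ M := Real.log_nonneg hc1'
  have hLM : ∀ᵐ x ∂P, L x ≤ M := by
    filter_upwards [hrcP] with x hx
    have hx' : (r x).toReal ≤ c.toReal := ENNReal.toReal_mono hctop hx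
    rcases le_or_gt (r x).toReal 1 with h1 | h1
    · exact le_trans (Real.log_nonpos ENNReal.toReal_nonneg h1) hM0
    · exact Real.log_le_log (lt_trans one_pos h1) hx'
  -- integrability of L
  have hnegL : ∫⁻ x, ENNReal.ofReal (max (-L x) 0) ∂P ≤ ENNReal.ofReal (Real.exp (-1)) := by
    rw [← hPr, lintegral_withDensity_eq_lintegral_mul Q hrm
      (by exact ((hLm.neg.max measurable_const).ennreal_ofReal))]
    have hbd : ∀ᵐ x ∂Q, (r * fun x => ENNReal.ofReal (max (-L x) 0)) x
        ≤ ENNReal.ofReal (Real.exp (-1)) := by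
      filter_upwards [hrtop] with x hx
      have hxe : r x = ENNReal.ofReal (r x).toReal := (ENNReal.ofReal_toReal hx.ne).symm
      calc (r * fun x => ENNReal.ofReal (max (-L x) 0)) x
          = ENNReal.ofReal (r x).toReal * ENNReal.ofReal (max (-L x) 0) := by
            rw [Pi.mul_apply, ← hxe]
        _ = ENNReal.ofReal ((r x).toReal * max (-L x) 0) := by
            rw [ENNReal.ofReal_mul ENNReal.toReal_nonneg]
        _ ≤ ENNReal.ofReal (Real.exp (-1)) := by
            apply ENNReal.ofReal_le_ofReal
            exact aux_mul_neg_log _ ENNReal.toReal_nonneg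
    calc ∫⁻ x, (r * fun x => ENNReal.ofReal (max (-L x) 0)) x ∂Q
        ≤ ∫⁻ _, ENNReal.ofReal (Real.exp (-1)) ∂Q := lintegral_mono_ae hbd
      _ = ENNReal.ofReal (Real.exp (-1)) := by simp
  have hLint : Integrable L P := by
    refine ⟨hLm.aestronglyMeasurable, ?_⟩
    rw [HasFiniteIntegral]
    have habs : ∀ᵐ x ∂P, ‖L x‖ₑ ≤
        ENNReal.ofReal M + ENNReal.ofReal (max (-L x) 0) := by
      filter_upwards [hLM] with x hx
      rw [← ENNReal.ofReal_add hM0 (le_max_right _ _), Real.enorm_eq_ofReal_abs]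
      apply ENNReal.ofReal_le_ofReal
      rcases le_total 0 (L x) with h | h
      · rw [abs_of_nonneg h]
        have : (0:ℝ) ≤ max (-L x) 0 := le_max_right _ _
        linarith
      · rw [abs_of_nonpos h]
        have : -L x ≤ max (-L x) 0 := le_max_left _ _
        linarith
    calc ∫⁻ x, ‖L x‖ₑ ∂P
        ≤ ∫⁻ x, (ENNReal.ofReal M + ENNReal.ofReal (max (-L x) 0)) ∂P :=
          lintegral_mono_ae habs
      _ = ENNReal.ofReal M + ∫⁻ x, ENNReal.ofReal (max (-L x) 0) ∂P := by
          rw [lintegral_add_left (by measurability)]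
          simp [lintegral_const]
      _ ≤ ENNReal.ofReal M + ENNReal.ofReal (Real.exp (-1)) := add_le_add le_rfl hnegL
      _ < ⊤ := by
          apply ENNReal.add_lt_top.mpr
          exact ⟨ENNReal.ofReal_lt_top, ENNReal.ofReal_lt_top⟩
  set h := fun x => f x - L x with hh
  have hhm : Measurable h := hfm.sub hLm
  have hhint : Integrable h P := hfi.sub hLint
  have hlin : ∫⁻ x, ENNReal.ofReal (Real.exp (h x)) ∂P
      ≤ ∫⁻ x, ENNReal.ofReal (Real.exp (f x)) ∂Q := by
    rw [← hPr, lintegral_withDensity_eq_lintegral_mul Q hrm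
      (by exact (Real.measurable_exp.comp hhm).ennreal_ofReal)]
    refine lintegral_mono_ae ?_
    filter_upwards [hrtop] with x hx
    rcases eq_or_lt_of_le (show (0:ℝ≥0∞) ≤ r x from zero_le) with h0 | h0
    · simp [Pi.mul_apply, ← h0]
    · have ht : 0 < (r x).toReal := ENNReal.toReal_pos h0.ne' hx.ne
      have : (r * fun x => ENNReal.ofReal (Real.exp (h x))) x
          = ENNReal.ofReal (Real.exp (f x)) := by
        rw [Pi.mul_apply, ← ENNReal.ofReal_toReal hx.ne,
          ← ENNReal.ofReal_mul ENNReal.toReal_nonneg]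
        congr 1
        rw [hh]
        simp only []
        rw [Real.exp_sub, hL]
        simp only []
        rw [Real.exp_log ht]
        field_simp
      rw [this]
  have hehP : Integrable (fun x => Real.exp (h x)) P := by
    refine ⟨(Real.measurable_exp.comp hhm).aestronglyMeasurable, ?_⟩
    rw [HasFiniteIntegral]
    have heq : ∀ x, ‖Real.exp (h x)‖ₑ = ENNReal.ofReal (Real.exp (h x)) :=
      fun x => (Real.enorm_eq_ofReal (Real.exp_pos _).le)
    simp_rw [heq]
    refine lt_of_le_of_lt hlin ?_
    rw [← MeasureTheory.ofReal_integral_eq_lintegral_ofReal hefQ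
      (Filter.Eventually.of_forall fun x => (Real.exp_pos _).le)]
    exact ENNReal.ofReal_lt_top
  have hint_le : ∫ x, Real.exp (h x) ∂P ≤ ∫ x, Real.exp (f x) ∂Q := by
    rw [MeasureTheory.integral_eq_lintegral_of_nonneg_ae
        (Filter.Eventually.of_forall fun x => (Real.exp_pos _).le)
        (Real.measurable_exp.comp hhm).aestronglyMeasurable,
      MeasureTheory.integral_eq_lintegral_of_nonneg_ae
        (Filter.Eventually.of_forall fun x => (Real.exp_pos _).le)
        (Real.measurable_exp.comp hfm).aestronglyMeasurable]
    apply ENNReal.toReal_mono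
    · rw [← MeasureTheory.ofReal_integral_eq_lintegral_ofReal hefQ
        (Filter.Eventually.of_forall fun x => (Real.exp_pos _).le)]
      exact ENNReal.ofReal_ne_top
    · exact hlin
  have hjen := aux_jensen_exp P h hhint hehP
  have hB0 : 0 < B := lt_of_lt_of_le (Real.exp_pos _) (hjen.trans (hint_le.trans hB))
  have hhle : ∫ x, h x ∂P ≤ Real.log B :=
    (Real.le_log_iff_exp_le hB0).mpr (hjen.trans (hint_le.trans hB))
  have hsub : ∫ x, h x ∂P = ∫ x, f x ∂P - ∫ x, L x ∂P := integral_sub hfi hLint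
  rw [hsub] at hhle
  linarith

/-- One chaining step bound: for a subgaussian process on `(T,d)`, nets at scales `2^{-k}`
and `2^{-(k-1)}` with projections `prjk, prjk1`, and a `T`-valued `W`,
`E[X_{prjk(W)} − X_{prjk1(W)}] ≤ 3·2^{−k}·√(2 I((prjk(W), prjk1(W)); X_T))`. -/
theorem one_chaining_step {Ω T : Type*} [MeasurableSpace Ω]
    (μ : Measure Ω) [IsProbabilityMeasure μ] [MetricSpace T] [MeasurableSpace T]
    [MeasurableSingletonClass T]
    (X : T → Ω → ℝ) (hmeas : ∀ t, Measurable (X t))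
    (hcent : ∀ t, Integrable (X t) μ ∧ ∫ ω, X t ω ∂μ = 0)
    (hsub : ∀ t s : T, ∀ l : ℝ, 0 ≤ l →
      Integrable (fun ω => Real.exp (l * (X t ω - X s ω))) μ ∧
      ∫ ω, Real.exp (l * (X t ω - X s ω)) ∂μ ≤ Real.exp (l ^ 2 * dist t s ^ 2 / 2))
    (k : ℤ) (Nk Nk1 : Finset T) (prjk prjk1 : T → T)
    (hprjkm : Measurable prjk) (hprjk1m : Measurable prjk1)
    (hNk : ∀ t : T, prjk t ∈ Nk ∧ dist t (prjk t) ≤ (2:ℝ) ^ (-k))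
    (hNk1 : ∀ t : T, prjk1 t ∈ Nk1 ∧ dist t (prjk1 t) ≤ (2:ℝ) ^ (-(k-1)))
    (W : Ω → T) (hW : Measurable W) :
    (∫ ω, (X (prjk (W ω)) ω - X (prjk1 (W ω)) ω) ∂μ) ≤
      3 * (2:ℝ) ^ (-k) * Real.sqrt (2 * mutualInfoReal μ
        (fun ω => (prjk (W ω), prjk1 (W ω))) (fun ω => fun t => X t ω)) := by
  classical
  set σk : ℝ := 3 * (2:ℝ) ^ (-k) with hσk
  have hσk0 : 0 < σk := by positivity
  set Z : Ω → T × T := fun ω => (prjk (W ω), prjk1 (W ω)) with hZ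
  set Y : Ω → T → ℝ := fun ω => fun t => X t ω with hY
  have hZm : Measurable Z := (hprjkm.comp hW).prodMk (hprjk1m.comp hW)
  have hYm : Measurable Y := measurable_pi_lambda _ (fun t => hmeas t)
  set pair : Ω → (T × T) × (T → ℝ) := fun ω => (Z ω, Y ω) with hpair
  have hpairm : Measurable pair := hZm.prodMk hYm
  set P : Measure ((T × T) × (T → ℝ)) := μ.map pair with hP
  set κ : Measure (T × T) := μ.map Z with hκ
  set ν : Measure (T → ℝ) := μ.map Y with hν
  set Q : Measure ((T × T) × (T → ℝ)) := κ.prod ν with hQ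
  haveI : IsProbabilityMeasure P := Measure.isProbabilityMeasure_map hpairm.aemeasurable
  haveI : IsProbabilityMeasure κ := Measure.isProbabilityMeasure_map hZm.aemeasurable
  haveI : IsProbabilityMeasure ν := Measure.isProbabilityMeasure_map hYm.aemeasurable
  haveI : IsProbabilityMeasure Q := by rw [hQ]; infer_instance
  set I : ℝ := ∫ p, Real.log (P.rnDeriv Q p).toReal ∂P with hI
  have hIeq : mutualInfoReal μ (fun ω => (prjk (W ω), prjk1 (W ω)))
      (fun ω => fun t => X t ω) = I := rfl
  -- the finite set of relevant pairs
  set S : Finset (T × T) := (Nk ×ˢ Nk1).filter (fun z => dist z.1 z.2 ≤ σk) with hS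
  have hZS : ∀ ω, Z ω ∈ S := by
    intro ω
    have h1 := hNk (W ω)
    have h2 := hNk1 (W ω)
    have hpow : (2:ℝ) ^ (-(k-1)) = (2:ℝ) ^ (-k) * 2 := by
      rw [show -(k-1) = -k + 1 by ring, zpow_add₀ (two_ne_zero), zpow_one]
    have hd : dist (prjk (W ω)) (prjk1 (W ω)) ≤ σk := by
      calc dist (prjk (W ω)) (prjk1 (W ω))
          ≤ dist (prjk (W ω)) (W ω) + dist (W ω) (prjk1 (W ω)) := dist_triangle _ _ _
        _ ≤ (2:ℝ) ^ (-k) + (2:ℝ) ^ (-k) * 2 := by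
            rw [dist_comm (prjk (W ω)) (W ω)]
            exact add_le_add h1.2 (hpow ▸ h2.2)
        _ = σk := by rw [hσk]; ring
    simp only [hS, Finset.mem_filter, Finset.mem_product]
    exact ⟨⟨h1.1, h2.1⟩, hd⟩
  have hSd : ∀ z ∈ S, dist z.1 z.2 ≤ σk := by
    intro z hz
    simp only [hS, Finset.mem_filter] at hz
    exact hz.2
  -- the constant c
  set c : ℝ≥0∞ := 1 + S.sup (fun z => if κ {z} = 0 then 0 else (κ {z})⁻¹) with hc
  have hc1 : 1 ≤ c := le_self_add
  have hc0 : c ≠ 0 := by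
    intro h; rw [h] at hc1; simp at hc1
  have hctop : c ≠ ⊤ := by
    rw [hc]
    refine (ENNReal.add_lt_top.mpr ⟨ENNReal.one_lt_top, ?_⟩).ne
    refine (Finset.sup_lt_iff (by simp : (⊥:ℝ≥0∞) < ⊤)).mpr fun z _ => ?_
    split_ifs with h
    · simp
    · exact ENNReal.inv_lt_top.mpr (pos_iff_ne_zero.mpr h)
  have hcz : ∀ z ∈ S, κ {z} ≠ 0 → (κ {z})⁻¹ ≤ c := by
    intro z hz h0
    calc (κ {z})⁻¹ = (if κ {z} = 0 then 0 else (κ {z})⁻¹) := (if_neg h0).symm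
      _ ≤ S.sup (fun z => if κ {z} = 0 then 0 else (κ {z})⁻¹) :=
          Finset.le_sup (f := fun z => if κ {z} = 0 then 0 else (κ {z})⁻¹) hz
      _ ≤ c := le_add_self
  -- P is dominated by c • Q
  have hPQ : P ≤ c • Q := by
    rw [Measure.le_iff]
    intro A hA
    have hPA : P A = μ (pair ⁻¹' A) := by rw [hP]; exact Measure.map_apply hpairm hA
    have hAz : ∀ z : T × T, MeasurableSet {y : T → ℝ | (z, y) ∈ A} :=
      fun z => measurable_prodMk_left hA
    have hsub1 : pair ⁻¹' A ⊆ ⋃ z ∈ S, (Z ⁻¹' {z} ∩ pair ⁻¹' A) := by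
      intro ω hω
      exact Set.mem_biUnion (hZS ω) ⟨rfl, hω⟩
    have hterm : ∀ z ∈ S, μ (Z ⁻¹' {z} ∩ pair ⁻¹' A)
        ≤ c * Q (A ∩ ({z} ×ˢ (Set.univ : Set (T → ℝ)))) := by
      intro z hz
      by_cases h0 : κ {z} = 0
      · have hz0 : μ (Z ⁻¹' {z}) = 0 := by
          rw [hκ, Measure.map_apply hZm (measurableSet_singleton z)] at h0
          exact h0
        exact le_trans (le_trans (measure_mono Set.inter_subset_left) hz0.le) zero_le
      · have hinter : Z ⁻¹' {z} ∩ pair ⁻¹' A = Z ⁻¹' {z} ∩ Y ⁻¹' {y | (z, y) ∈ A} := by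
          ext ω
          simp only [Set.mem_inter_iff, Set.mem_preimage, Set.mem_singleton_iff,
            Set.mem_setOf_eq]
          constructor
          · rintro ⟨h1, h2⟩
            refine ⟨h1, ?_⟩
            have hpe : pair ω = (z, Y ω) := by simp [hpair, h1]
            rwa [hpe] at h2
          · rintro ⟨h1, h2⟩
            refine ⟨h1, ?_⟩
            have hpe : pair ω = (z, Y ω) := by simp [hpair, h1]
            rw [hpe]
            exact h2
        have hset : A ∩ ({z} ×ˢ (Set.univ : Set (T → ℝ)))
            = {z} ×ˢ {y | (z, y) ∈ A} := by
          ext p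
          simp only [Set.mem_inter_iff, Set.mem_prod, Set.mem_singleton_iff,
            Set.mem_setOf_eq, Set.mem_univ, and_true]
          constructor
          · rintro ⟨hpA, hp1⟩
            refine ⟨hp1, ?_⟩
            rwa [← hp1, Prod.mk.eta]
          · rintro ⟨hp1, hpz⟩
            refine ⟨?_, hp1⟩
            rwa [← hp1, Prod.mk.eta] at hpz
        calc μ (Z ⁻¹' {z} ∩ pair ⁻¹' A) ≤ μ (Y ⁻¹' {y | (z, y) ∈ A}) := by
              rw [hinter]; exact measure_mono Set.inter_subset_right
          _ = ν {y | (z, y) ∈ A} := by rw [hν, Measure.map_apply hYm (hAz z)]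
          _ = (κ {z})⁻¹ * (κ {z} * ν {y | (z, y) ∈ A}) := by
              rw [← mul_assoc, ENNReal.inv_mul_cancel h0 (measure_ne_top κ _), one_mul]
          _ ≤ c * (κ {z} * ν {y | (z, y) ∈ A}) := mul_le_mul_left (hcz z hz h0) _
          _ = c * Q (A ∩ ({z} ×ˢ (Set.univ : Set (T → ℝ)))) := by
              rw [hQ, hset, Measure.prod_prod]
    have hsum2 : ∑ z ∈ S, Q (A ∩ ({z} ×ˢ (Set.univ : Set (T → ℝ)))) ≤ Q A := by
      have hd : Set.PairwiseDisjoint (↑S)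
          (fun z : T × T => A ∩ ({z} ×ˢ (Set.univ : Set (T → ℝ)))) := by
        intro z1 _ z2 _ hne
        apply Set.disjoint_left.mpr
        rintro p hp hq
        have h1 : p.1 = z1 := hp.2.1
        have h2 : p.1 = z2 := hq.2.1
        exact hne (h1.symm.trans h2)
      have hm : ∀ z ∈ S, MeasurableSet (A ∩ ({z} ×ˢ (Set.univ : Set (T → ℝ)))) :=
        fun z _ => hA.inter ((measurableSet_singleton z).prod MeasurableSet.univ)
      rw [← measure_biUnion_finset hd hm]
      exact measure_mono (Set.iUnion₂_subset fun z _ => Set.inter_subset_left)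
    calc P A = μ (pair ⁻¹' A) := hPA
      _ ≤ μ (⋃ z ∈ S, (Z ⁻¹' {z} ∩ pair ⁻¹' A)) := measure_mono hsub1
      _ ≤ ∑ z ∈ S, μ (Z ⁻¹' {z} ∩ pair ⁻¹' A) := measure_biUnion_finset_le S _
      _ ≤ ∑ z ∈ S, c * Q (A ∩ ({z} ×ˢ (Set.univ : Set (T → ℝ)))) := Finset.sum_le_sum hterm
      _ = c * ∑ z ∈ S, Q (A ∩ ({z} ×ˢ (Set.univ : Set (T → ℝ)))) := (Finset.mul_sum _ _ _).symm
      _ ≤ c * Q A := mul_le_mul_right hsum2 _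
      _ = (c • Q) A := by rw [Measure.smul_apply, smul_eq_mul]
  -- the finite-valued increment function
  set fS : (T × T) × (T → ℝ) → ℝ :=
    fun p => ∑ z ∈ S, if p.1 = z then (p.2 z.1 - p.2 z.2) else 0 with hfS
  have hfSm : Measurable fS := by
    apply Finset.measurable_sum
    intro z _
    refine Measurable.ite ?_ ?_ measurable_const
    · exact measurable_fst (measurableSet_singleton z)
    · exact ((measurable_pi_apply z.1).comp measurable_snd).sub
        ((measurable_pi_apply z.2).comp measurable_snd)
  have hfSval : ∀ (w : T × T) (y : T → ℝ), w ∈ S → fS (w, y) = y w.1 - y w.2 := by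
    intro w y hw
    rw [hfS]
    simp only
    rw [Finset.sum_ite_eq S w (fun z => y z.1 - y z.2), if_pos hw]
  have hfSval0 : ∀ (w : T × T) (y : T → ℝ), w ∉ S → fS (w, y) = 0 := by
    intro w y hw
    rw [hfS]
    simp only
    rw [Finset.sum_ite_eq S w (fun z => y z.1 - y z.2), if_neg hw]
  have hpairval : ∀ ω, fS (pair ω) = X (prjk (W ω)) ω - X (prjk1 (W ω)) ω := by
    intro ω
    exact hfSval (Z ω) (Y ω) (hZS ω)
  have hcomp_int : Integrable (fun ω => fS (pair ω)) μ := by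
    have hieq : ∀ z : T × T, (fun ω => if Z ω = z then X z.1 ω - X z.2 ω else 0)
        = Set.indicator (Z ⁻¹' {z}) (fun ω => X z.1 ω - X z.2 ω) := by
      intro z
      funext ω
      simp only [Set.indicator_apply, Set.mem_preimage, Set.mem_singleton_iff]
    have heq : (fun ω => fS (pair ω))
        = fun ω => ∑ z ∈ S, (fun ω => if Z ω = z then X z.1 ω - X z.2 ω else 0) ω := by
      funext ω
      rw [hfS]
    rw [heq]
    apply integrable_finset_sum
    intro z _
    rw [hieq z]
    exact ((hcent z.1).1.sub (hcent z.2).1).indicator (hZm (measurableSet_singleton z))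
  have hfSP : Integrable fS P := by
    rw [hP]
    exact (integrable_map_measure hfSm.aestronglyMeasurable hpairm.aemeasurable).mpr hcomp_int
  set E : ℝ := ∫ ω, (X (prjk (W ω)) ω - X (prjk1 (W ω)) ω) ∂μ with hE
  have hEeq : ∫ p, fS p ∂P = E := by
    rw [hP, integral_map hpairm.aemeasurable hfSm.aestronglyMeasurable, hE]
    exact integral_congr_ae (Filter.Eventually.of_forall fun ω => hpairval ω)
  -- moment generating function bound under Q
  have hMGF : ∀ l : ℝ, 0 ≤ l →
      Integrable (fun p => Real.exp (l * fS p)) Q ∧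
      ∫ p, Real.exp (l * fS p) ∂Q ≤ Real.exp (l ^ 2 * σk ^ 2 / 2) := by
    intro l hl
    set C : ℝ := Real.exp (l ^ 2 * σk ^ 2 / 2) with hC
    have hC1 : 1 ≤ C := Real.one_le_exp (by positivity)
    have hgm : Measurable fun p => Real.exp (l * fS p) :=
      Real.measurable_exp.comp (hfSm.const_mul l)
    have hinner : ∀ z : T × T, ∫⁻ y, ENNReal.ofReal (Real.exp (l * fS (z, y))) ∂ν
        ≤ ENNReal.ofReal C := by
      intro z
      by_cases hz : z ∈ S
      · have h1 : ∀ y : T → ℝ, fS (z, y) = y z.1 - y z.2 := fun y => hfSval z y hz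
        have hmeq : ∫⁻ y, ENNReal.ofReal (Real.exp (l * fS (z, y))) ∂ν
            = ∫⁻ ω, ENNReal.ofReal (Real.exp (l * (X z.1 ω - X z.2 ω))) ∂μ := by
          simp_rw [h1]
          rw [hν, lintegral_map (by
            exact (Real.measurable_exp.comp
              (by fun_prop : Measurable fun y : T → ℝ => l * (y z.1 - y z.2))).ennreal_ofReal) hYm]
        rw [hmeq, ← MeasureTheory.ofReal_integral_eq_lintegral_ofReal (hsub z.1 z.2 l hl).1
          (Filter.Eventually.of_forall fun ω => (Real.exp_pos _).le)]
        apply ENNReal.ofReal_le_ofReal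
        refine le_trans (hsub z.1 z.2 l hl).2 ?_
        rw [hC]
        apply Real.exp_le_exp.mpr
        have hd := hSd z hz
        have hd0 : (0:ℝ) ≤ dist z.1 z.2 := dist_nonneg
        have hdd : dist z.1 z.2 ^ 2 ≤ σk ^ 2 := by nlinarith
        have hmm := mul_le_mul_of_nonneg_left hdd (sq_nonneg l)
        linarith
      · have h0 : ∀ y : T → ℝ, fS (z, y) = 0 := fun y => hfSval0 z y hz
        simp_rw [h0, mul_zero, Real.exp_zero]
        rw [lintegral_const]
        simp only [measure_univ, mul_one]
        exact ENNReal.ofReal_le_ofReal hC1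
    have hQlin : ∫⁻ p, ENNReal.ofReal (Real.exp (l * fS p)) ∂Q ≤ ENNReal.ofReal C := by
      rw [hQ, lintegral_prod _ (by exact hgm.ennreal_ofReal.aemeasurable)]
      calc ∫⁻ z, ∫⁻ y, ENNReal.ofReal (Real.exp (l * fS (z, y))) ∂ν ∂κ
          ≤ ∫⁻ _, ENNReal.ofReal C ∂κ := lintegral_mono fun z => hinner z
        _ = ENNReal.ofReal C := by simp
    have hint : Integrable (fun p => Real.exp (l * fS p)) Q := by
      refine ⟨hgm.aestronglyMeasurable, ?_⟩
      rw [HasFiniteIntegral]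
      calc ∫⁻ p, (‖Real.exp (l * fS p)‖₊ : ℝ≥0∞) ∂Q
          = ∫⁻ p, ENNReal.ofReal (Real.exp (l * fS p)) ∂Q := by
            congr 1
            funext p
            exact Real.enorm_eq_ofReal (Real.exp_pos _).le
        _ ≤ ENNReal.ofReal C := hQlin
        _ < ⊤ := ENNReal.ofReal_lt_top
    refine ⟨hint, ?_⟩
    rw [MeasureTheory.integral_eq_lintegral_of_nonneg_ae
      (Filter.Eventually.of_forall fun p => (Real.exp_pos _).le) hgm.aestronglyMeasurable]
    calc (∫⁻ p, ENNReal.ofReal (Real.exp (l * fS p)) ∂Q).toReal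
        ≤ (ENNReal.ofReal C).toReal := ENNReal.toReal_mono ENNReal.ofReal_ne_top hQlin
      _ = C := ENNReal.toReal_ofReal (le_trans zero_le_one hC1)
  -- the key Donsker–Varadhan estimate
  have hkey : ∀ l : ℝ, 0 ≤ l → l * E ≤ I + l ^ 2 * σk ^ 2 / 2 := by
    intro l hl
    obtain ⟨hint, hbd⟩ := hMGF l hl
    have h := aux_DV P Q c hc0 hctop hc1 hPQ (fun p => l * fS p)
      (hfSm.const_mul l) (hfSP.const_mul l) hint _ hbd
    rw [MeasureTheory.integral_const_mul, hEeq, Real.log_exp] at h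
    exact h
  have hfin := aux_opt E I σk hσk0 hkey
  rw [hIeq]
  exact hfin
end
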